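/- arXiv:2003.10232 — 9 statements merged into one kernel-verified Lean document; each statement's English description precedes it below -/
import Mathlib

section
/- For every connected finite simple graph G with at least three vertices, the dominated edge chromatic number of G is at least the total edge domination number of G, i.e., χ'_dom(G) ≥ γ'_t(G). -/
open SimpleGraph

/-- Two edges of a simple graph are adjacent if they are distinct and share an endpoint. -/
def EdgeAdj {V : Type*} (G : SimpleGraph V) (e f : G.edgeSet) : Prop :=
  e ≠ f ∧ ∃ v, v ∈ (e : Sym2 V) ∧ v ∈ (f : Sym2 V)

/-- A dominated edge coloring of `G` with colors in `Fin n`: a proper edge coloring such that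
every color class is dominated by some edge. -/
def IsDomEdgeColoring {V : Type*} (G : SimpleGraph V) {n : ℕ} (c : G.edgeSet → Fin n) : Prop :=
  (∀ e f, EdgeAdj G e f → c e ≠ c f) ∧
  (∀ i : Fin n, ∃ e : G.edgeSet, ∀ f, c f = i → f = e ∨ EdgeAdj G e f)

/-- The dominated edge chromatic number: the least number of colors in a
dominated edge coloring. -/
noncomputable def domEdgeChrom {V : Type*} (G : SimpleGraph V) : ℕ :=
  sInf {n | ∃ c : G.edgeSet → Fin n, IsDomEdgeColoring G c}

/-- `D` is a total edge dominating set: every edge of `G` is adjacent to an edge of `D`. -/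
def IsTotalEdgeDom {V : Type*} (G : SimpleGraph V) (D : Set G.edgeSet) : Prop :=
  ∀ e : G.edgeSet, ∃ f ∈ D, EdgeAdj G e f

/-- The total edge domination number of `G`. -/
noncomputable def totalEdgeDomNumber {V : Type*} (G : SimpleGraph V) : ℕ :=
  sInf {n | ∃ D : Set G.edgeSet, D.Finite ∧ D.ncard = n ∧ IsTotalEdgeDom G D}

lemma edgeAdj_symm {V : Type*} {G : SimpleGraph V} {e f : G.edgeSet}
    (h : EdgeAdj G e f) : EdgeAdj G f e :=
  ⟨h.1.symm, h.2.imp fun _ hv => ⟨hv.2, hv.1⟩⟩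

/-- In a connected graph with at least three vertices, every edge has an adjacent edge. -/
lemma exists_adj_edge {V : Type*} [Fintype V] (G : SimpleGraph V)
    (hG : G.Connected) (hV : 3 ≤ Fintype.card V) (e : G.edgeSet) :
    ∃ f : G.edgeSet, EdgeAdj G e f := by
  classical
  obtain ⟨s, hs⟩ := e
  induction s using Sym2.ind with
  | _ u v =>
    have huv : G.Adj u v := hs
    by_contra hcon
    push_neg at hcon
    -- every neighbor of u is v
    have hu : ∀ z, G.Adj u z → z = v := by
      intro z hz
      by_contra hzv
      refine hcon ⟨s(u, z), hz⟩ ⟨?_, u, ?_, ?_⟩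
      · intro h
        have : s(u, v) = s(u, z) := congrArg Subtype.val h
        rw [Sym2.eq_iff] at this
        rcases this with ⟨_, h2⟩ | ⟨_, h2⟩
        · exact hzv h2.symm
        · exact G.ne_of_adj huv h2.symm
      · simp
      · simp
    have hv : ∀ z, G.Adj v z → z = u := by
      intro z hz
      by_contra hzu
      refine hcon ⟨s(v, z), hz⟩ ⟨?_, v, ?_, ?_⟩
      · intro h
        have : s(u, v) = s(v, z) := congrArg Subtype.val h
        rw [Sym2.eq_iff] at this
        rcases this with ⟨h1, _⟩ | ⟨h1, _⟩
        · exact G.ne_of_adj huv h1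
        · exact hzu h1.symm
      · simp
      · simp
    -- there is a third vertex
    obtain ⟨w, hw⟩ : ∃ w : V, w ≠ u ∧ w ≠ v := by
      by_contra hcon2
      push_neg at hcon2
      have hsub : (Finset.univ : Finset V) ⊆ {u, v} := by
        intro x _
        rcases em (x = u) with rfl | hx
        · simp
        · simp [hcon2 x hx]
      have := Finset.card_le_card hsub
      rw [Finset.card_univ] at this
      have h2 : ({u, v} : Finset V).card ≤ 2 := Finset.card_insert_le _ _ |>.trans (by simp)
      omega
    -- walks starting in {u,v} stay in {u,v}
    have key : ∀ a b (p : G.Walk a b), (a = u ∨ a = v) → (b = u ∨ b = v) := by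
      intro a b p
      induction p with
      | nil => exact id
      | cons h p ih =>
        intro ha
        apply ih
        rcases ha with rfl | rfl
        · right; exact hu _ h
        · left; exact hv _ h
      
    obtain ⟨p⟩ := hG.preconnected u w
    rcases key u w p (Or.inl rfl) with h | h
    · exact hw.1 h
    · exact hw.2 h

/-- For every connected finite simple graph with at least three vertices,
`χ'_dom(G) ≥ γ'_t(G)`. -/
theorem stmt_0 {V : Type*} [Fintype V] (G : SimpleGraph V)
    (hG : G.Connected) (hV : 3 ≤ Fintype.card V) :
    totalEdgeDomNumber G ≤ domEdgeChrom G := by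
  classical
  have : Finite G.edgeSet := inferInstance
  have hFt : Fintype G.edgeSet := Fintype.ofFinite _
  -- the defining set of domEdgeChrom is nonempty
  have hne : ∃ n : ℕ, ∃ c : G.edgeSet → Fin n, IsDomEdgeColoring G c := by
    refine ⟨Fintype.card G.edgeSet, fun e => (Fintype.equivFin G.edgeSet) e, ?_, ?_⟩
    · intro e f hadj h
      exact hadj.1 ((Fintype.equivFin G.edgeSet).injective h)
    · intro i
      refine ⟨(Fintype.equivFin G.edgeSet).symm i, fun f hf => Or.inl ?_⟩
      exact (Equiv.eq_symm_apply _).2 hf |>.symm ▸ rfl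
  obtain ⟨n0, hn0⟩ := hne
  have hmem : domEdgeChrom G ∈ {n | ∃ c : G.edgeSet → Fin n, IsDomEdgeColoring G c} :=
    Nat.sInf_mem ⟨n0, hn0⟩
  set n := domEdgeChrom G with hn
  obtain ⟨c, hcprop, hcdom⟩ := hmem
  -- choose for each color a dominating edge of a different color
  have hchoice : ∀ i : Fin n, ∃ e : G.edgeSet, ∀ f, c f = i → EdgeAdj G e f := by
    intro i
    obtain ⟨d, hd⟩ := hcdom i
    by_cases hdi : c d = i
    · -- class i is the singleton {d}; use a neighbor of d
      obtain ⟨g, hg⟩ := exists_adj_edge G hG hV d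
      refine ⟨g, fun f hf => ?_⟩
      rcases hd f hf with rfl | hadj
      · exact edgeAdj_symm hg
      · exact absurd (hdi.trans hf.symm) (hcprop d f hadj)
    · refine ⟨d, fun f hf => ?_⟩
      rcases hd f hf with rfl | hadj
      · exact absurd hf hdi
      · exact edgeAdj_symm (edgeAdj_symm hadj)
  choose eFun hE using hchoice
  set D : Set G.edgeSet := Set.range eFun with hD
  have htot : IsTotalEdgeDom G D := by
    intro f
    exact ⟨eFun (c f), Set.mem_range_self _, edgeAdj_symm (hE (c f) f rfl)⟩
  have h1 : totalEdgeDomNumber G ≤ D.ncard :=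
    Nat.sInf_le ⟨D, Set.finite_range _, rfl, htot⟩
  have h2 : D.ncard ≤ n := by
    have : D = eFun '' Set.univ := by simp [hD]
    rw [this]
    calc (eFun '' Set.univ).ncard ≤ (Set.univ : Set (Fin n)).ncard :=
          Set.ncard_image_le (Set.finite_univ)
      _ = n := by simp [Set.ncard_univ]
  exact h1.trans h2
end

section
/- For every natural number m ≥ 4, the dominated edge chromatic number of the cycle C_m on m vertices equals m/2 if m ≡ 0 (mod 4), and equals ⌊m/2⌋ + 1 otherwise. -/
/-!
Index the edges of `C_m` by `Fin m`, edge `i` joining `i` and `i + 1`. A color class dominated by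
edge `k` lies in `{k - 1, k, k + 1}`, and if it contains `k`, properness makes it `{k}`. Either way
it lies in `{k' - 1, k' + 1}` for some `k'`: it has at most two edges, and for even `m` their
indices have the same parity. Hence `m ≤ 2n`, and for even `m` the `m / 2` even and the `m / 2`
odd edges need `⌈m / 4⌉` colors each, which is `m / 2 + 1` colors in all when `m ≡ 2 (mod 4)`.
Pairing edge `4q` with `4q + 2` and `4q + 1` with `4q + 3` attains these bounds.
-/

open SimpleGraph

open Finset

namespace Fin

variable {m : ℕ} [NeZero m]

lemma val_add_one_cases (i : Fin m) :
    (i + 1).val = i.val + 1 ∧ i.val + 1 < m ∨ (i + 1).val = 0 ∧ i.val + 1 = m := by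
  rcases (show i.val + 1 ≤ m from i.isLt).lt_or_eq with h | h
  · exact Or.inl ⟨val_add_one_of_lt' h, h⟩
  · refine Or.inr ⟨?_, h⟩
    rw [val_add, val_one', Nat.add_mod_mod, h, Nat.mod_self]

lemma even_val_add_one (h2 : 2 ∣ m) (i : Fin m) : Even (i + 1).val ↔ ¬Even i.val := by
  rw [← Nat.even_add_one]
  rcases val_add_one_cases i with ⟨h, -⟩ | ⟨h, hm⟩
  · rw [h]
  · rw [h, hm]
    simp [even_iff_two_dvd, h2]

lemma card_filter_even_val (h2 : 2 ∣ m) :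
    #{i : Fin m | Even i.val} = #{i : Fin m | ¬Even i.val} := by
  refine card_nbij' (· + 1) (· - 1) (fun i hi => ?_) (fun i hi => ?_)
    (fun i _ => add_sub_cancel_right i 1) (fun i _ => sub_add_cancel i 1)
  all_goals simp only [mem_coe, mem_filter, mem_univ, true_and] at hi ⊢
  · exact (even_val_add_one h2 i).not.mpr (not_not.mpr hi)
  · rwa [← not_not (a := Even _), ← even_val_add_one h2, sub_add_cancel]

end Fin

/-- A dominated edge coloring of `C_m`, where `d i` is the color of the edge `{i, i + 1}`. -/
def IsCyclicDomColoring {m n : ℕ} [NeZero m] (d : Fin m → Fin n) : Prop :=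
  (∀ i, d i ≠ d (i + 1)) ∧ ∀ v, ∃ k, ∀ j, d j = v → j = k ∨ j = k + 1 ∨ k = j + 1

section CycleEdges

variable {m : ℕ} [NeZero m]

lemma cycleGraph_adj_add_one (hm : 2 ≤ m) (i : Fin m) : (cycleGraph m).Adj i (i + 1) := by
  rw [cycleGraph_adj', add_sub_cancel_left, Fin.val_one', Nat.mod_eq_of_lt hm]
  exact Or.inr rfl

def cycleEdge (hm : 3 ≤ m) (i : Fin m) : (cycleGraph m).edgeSet :=
  ⟨s(i, i + 1), cycleGraph_adj_add_one (by omega) i⟩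

lemma cycleEdge_injective (hm : 3 ≤ m) : Function.Injective (cycleEdge hm) := by
  intro i j hij
  rcases Sym2.eq_iff.1 (congrArg Subtype.val hij) with ⟨h, -⟩ | ⟨h, h'⟩
  · exact h
  · have h2 : (2 : Fin m) ≠ 0 := by simp [Fin.ext_iff, Nat.mod_eq_of_lt (show 2 < m by omega)]
    grind

lemma cycleEdge_surjective (hm : 3 ≤ m) : Function.Surjective (cycleEdge hm) := by
  have h1 : (1 : Fin m).val = 1 := by rw [Fin.val_one', Nat.mod_eq_of_lt (by omega)]
  rintro ⟨e, he⟩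
  induction e using Sym2.ind with
  | _ u v =>
    rw [mem_edgeSet, cycleGraph_adj', ← h1, ← Fin.ext_iff, ← Fin.ext_iff,
      sub_eq_iff_eq_add', sub_eq_iff_eq_add'] at he
    rcases he with rfl | rfl
    · exact ⟨v, Subtype.ext Sym2.eq_swap⟩
    · exact ⟨u, rfl⟩

lemma edgeAdj_cycleEdge_iff (hm : 3 ≤ m) {i j : Fin m} :
    EdgeAdj (cycleGraph m) (cycleEdge hm i) (cycleEdge hm j) ↔ j = i + 1 ∨ i = j + 1 := by
  have h1 : (1 : Fin m) ≠ 0 := by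
    rw [ne_eq, Fin.one_eq_zero_iff]
    omega
  rw [EdgeAdj, ne_eq, (cycleEdge_injective hm).eq_iff]
  simp only [cycleEdge, Sym2.mem_iff]
  constructor
  · rintro ⟨hij, v, rfl | rfl, rfl | h⟩
    · exact absurd rfl hij
    · exact Or.inr h
    · exact Or.inl rfl
    · exact absurd (add_right_cancel h) hij
  · rintro (rfl | rfl)
    · exact ⟨(add_ne_left.2 h1).symm, i + 1, Or.inr rfl, Or.inl rfl⟩
    · exact ⟨add_ne_left.2 h1, j + 1, Or.inl rfl, Or.inr rfl⟩

lemma isDomEdgeColoring_cycleGraph_iff (hm : 3 ≤ m) {n : ℕ}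
    (c : (cycleGraph m).edgeSet → Fin n) :
    IsDomEdgeColoring (cycleGraph m) c ↔ IsCyclicDomColoring (c ∘ cycleEdge hm) := by
  simp only [IsDomEdgeColoring, IsCyclicDomColoring, (cycleEdge_surjective hm).forall,
    (cycleEdge_surjective hm).exists, edgeAdj_cycleEdge_iff, (cycleEdge_injective hm).eq_iff,
    Function.comp_apply]
  refine and_congr ⟨fun h i => h i (i + 1) (Or.inl rfl), ?_⟩ Iff.rfl
  rintro h i j (rfl | rfl)
  exacts [h i, (h j).symm]

lemma domEdgeChrom_cycleGraph (hm : 3 ≤ m) :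
    domEdgeChrom (cycleGraph m) = sInf {n | ∃ d : Fin m → Fin n, IsCyclicDomColoring d} := by
  let e := Equiv.ofBijective _ ⟨cycleEdge_injective hm, cycleEdge_surjective hm⟩
  refine congrArg sInf (Set.ext fun n => ⟨fun ⟨c, hc⟩ => ?_, fun ⟨d, hd⟩ => ?_⟩)
  · exact ⟨_, (isDomEdgeColoring_cycleGraph_iff hm c).1 hc⟩
  · refine ⟨d ∘ e.symm, (isDomEdgeColoring_cycleGraph_iff hm _).2 ?_⟩
    convert hd
    exact funext fun i => congrArg d (e.symm_apply_apply i)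

end CycleEdges

namespace IsCyclicDomColoring

variable {m n : ℕ} [NeZero m] {d : Fin m → Fin n}

lemma exists_preimage_subset_pair (hd : IsCyclicDomColoring d) (v : Fin n) :
    ∃ k, d ⁻¹' {v} ⊆ {k - 1, k + 1} := by
  obtain ⟨k, hk⟩ := hd.2 v
  by_cases hkv : d k = v
  · refine ⟨k + 1, fun j (hj : d j = v) => Or.inl ?_⟩
    rcases hk j hj with rfl | rfl | rfl
    · exact (add_sub_cancel_right j 1).symm
    · exact absurd (hkv.trans hj.symm) (hd.1 k)
    · exact absurd (hj.trans hkv.symm) (hd.1 j)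
  · refine ⟨k, fun j (hj : d j = v) => ?_⟩
    rcases hk j hj with rfl | h | rfl
    · exact absurd hj hkv
    · exact Or.inr h
    · exact Or.inl (add_sub_cancel_right j 1).symm

lemma card_filter_le_two (hd : IsCyclicDomColoring d) (s : Finset (Fin m)) (v : Fin n) :
    #{j ∈ s | d j = v} ≤ 2 := by
  obtain ⟨k, hk⟩ := hd.exists_preimage_subset_pair v
  calc #{j ∈ s | d j = v} ≤ #{k - 1, k + 1} :=
        card_le_card fun j hj => by simpa using hk (mem_filter.1 hj).2
    _ ≤ 2 := card_le_two

lemma card_le_two_mul_card_image (hd : IsCyclicDomColoring d) (s : Finset (Fin m)) :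
    #s ≤ 2 * #(s.image d) :=
  card_le_mul_card_image s 2 fun v _ => hd.card_filter_le_two s v

lemma even_val_iff (hd : IsCyclicDomColoring d) (h2 : 2 ∣ m) {i j : Fin m} (hij : d i = d j) :
    Even i.val ↔ Even j.val := by
  obtain ⟨k, hk⟩ := hd.exists_preimage_subset_pair (d j)
  have hi : i = k - 1 ∨ i = k + 1 := hk hij
  have hj : j = k - 1 ∨ j = k + 1 := hk rfl
  have hk : Even (k + 1).val ↔ Even (k - 1).val := by
    rw [show k + 1 = k - 1 + 1 + 1 by rw [sub_add_cancel], Fin.even_val_add_one h2,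
      Fin.even_val_add_one h2, not_not]
  rcases hi with rfl | rfl <;> rcases hj with rfl | rfl <;> tauto

theorem le_card_colors (hd : IsCyclicDomColoring d) :
    (if m % 4 = 0 then m / 2 else m / 2 + 1) ≤ n := by
  have hcolors (t : Finset (Fin n)) : #t ≤ n := (card_le_univ t).trans_eq (Fintype.card_fin n)
  rcases Nat.even_or_odd m with heven | hodd
  · have h2 := heven.two_dvd
    let E : Finset (Fin m) := {i | Even i.val}
    let O : Finset (Fin m) := {i | ¬Even i.val}
    have hsum : #E + #O = m := by
      rw [card_filter_add_card_filter_not, card_univ, Fintype.card_fin]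
    have hEO : #E = #O := Fin.card_filter_even_val h2
    have hdisj : Disjoint (E.image d) (O.image d) := by
      simp only [Finset.disjoint_left, mem_image, E, O, mem_filter, mem_univ, true_and]
      rintro _ ⟨i, hi, rfl⟩ ⟨j, hj, hji⟩
      exact hj ((hd.even_val_iff h2 hji).2 hi)
    have hunion := card_union_of_disjoint hdisj ▸ hcolors _
    have hE := hd.card_le_two_mul_card_image E
    have hO := hd.card_le_two_mul_card_image O
    split_ifs <;> omega
  · have huniv := hd.card_le_two_mul_card_image univ
    rw [card_univ, Fintype.card_fin] at huniv
    have himage := hcolors (univ.image d)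
    have hm2 := Nat.odd_iff.1 hodd
    split_ifs <;> omega

end IsCyclicDomColoring

/-- Edges `4q, 4q + 2` get color `2q` and edges `4q + 1, 4q + 3` get color `2q + 1`. The class of
color `v` is dominated by the edge `4 (v / 2) + v % 2 + 1`, or by the last edge `m - 1` if that
index is out of range. -/
theorem exists_isCyclicDomColoring {m : ℕ} [NeZero m] (hm : 4 ≤ m) :
    ∃ d : Fin m → Fin (if m % 4 = 0 then m / 2 else m / 2 + 1), IsCyclicDomColoring d := by
  refine ⟨fun i => ⟨2 * (i.val / 4) + i.val % 2, ?_⟩, fun i => ?_, fun v => ?_⟩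
  · have := i.isLt
    split_ifs <;> omega
  · have := Fin.val_add_one_cases i
    simp only [ne_eq, Fin.mk.injEq]
    omega
  · let k : Fin m := ⟨min (4 * (v.val / 2) + v.val % 2 + 1) (m - 1), by omega⟩
    refine ⟨k, fun j hj => ?_⟩
    have := Fin.val_add_one_cases j
    have := Fin.val_add_one_cases k
    simp only [Fin.ext_iff, k] at hj this ⊢
    omega

/-- For `m ≥ 4`, `χ'_dom(C_m) = m/2` if `m ≡ 0 (mod 4)`, and `⌊m/2⌋ + 1` otherwise. -/
theorem stmt_3 (m : ℕ) (hm : 4 ≤ m) :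
    domEdgeChrom (SimpleGraph.cycleGraph m) =
      if m % 4 = 0 then m / 2 else m / 2 + 1 := by
  have : NeZero m := ⟨by omega⟩
  rw [domEdgeChrom_cycleGraph (by omega)]
  obtain ⟨d, hd⟩ := exists_isCyclicDomColoring hm
  exact le_antisymm (Nat.sInf_le ⟨d, hd⟩)
    (le_csInf ⟨_, d, hd⟩ fun _ ⟨_, hd'⟩ => hd'.le_card_colors)
end

section
/- For all natural numbers m, n ≥ 2, the dominated edge chromatic number of the complete bipartite graph K_{m,n} equals ⌈mn/2⌉. -/
open SimpleGraph

namespace DomBip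
def sm (n j : ℕ) : ℕ := if j + 1 = n then 0 else j + 1
def pm (n j : ℕ) : ℕ := if j = 0 then n - 1 else j - 1

lemma sm_lt {n j : ℕ} (h : j < n) : sm n j < n := by unfold sm; split <;> omega
lemma pm_lt {n j : ℕ} (hn : 0 < n) (h : j < n) : pm n j < n := by unfold pm; split <;> omega
lemma pm_sm {n j : ℕ} (h : j < n) : pm n (sm n j) = j := by unfold sm pm; split <;> split <;> omega
lemma sm_pm {n j : ℕ} (h : j < n) (hj : j ≤ n) : sm n (pm n j) = j := by
  unfold sm pm; split <;> split <;> omega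
lemma sm_ne {n j : ℕ} (h : j < n) (hn : 2 ≤ n) : sm n j ≠ j := by unfold sm; split <;> omega
lemma pm_ne {n j : ℕ} (h : j < n) (hn : 2 ≤ n) : pm n j ≠ j := by unfold pm; split <;> omega

def pE (m n : ℕ) (i j : ℕ) : ℕ × ℕ :=
  if i % 2 = 0 then (i + 1, sm n j) else (i - 1, pm n j)

def Good (m n : ℕ) (p : ℕ → ℕ → ℕ × ℕ) : Prop :=
  (∀ i j, i < m → j < n → (p i j).1 < m ∧ (p i j).2 < n) ∧
  (∀ i j, i < m → j < n → p (p i j).1 (p i j).2 = (i, j)) ∧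
  (∀ i j, i < m → j < n → (p i j).1 ≠ i ∧ (p i j).2 ≠ j ∨ p i j = (i, j)) ∧
  (∀ i j i' j', i < m → j < n → i' < m → j' < n →
    p i j = (i, j) → p i' j' = (i', j') → i = i' ∧ j = j')

lemma good_pE {m n : ℕ} (hm : 2 ≤ m) (hme : m % 2 = 0) (hn : 2 ≤ n) : Good m n (pE m n) := by
  refine ⟨?_, ?_, ?_, ?_⟩ <;> intro i j hi hj <;>
    simp only [pE, sm, pm] <;> split_ifs <;> simp_all [Prod.ext_iff] <;> omega

def pO (m n : ℕ) (i j : ℕ) : ℕ × ℕ :=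
  if 3 ≤ i then (if (i - 3) % 2 = 0 then (i + 1, sm n j) else (i - 1, pm n j))
  else if 3 ≤ j then (if (j - 3) % 2 = 0 then ((i + 1) % 3, j + 1) else ((i + 2) % 3, j - 1))
  else if i = 0 ∧ j = 0 then (1, 1)
  else if i = 1 ∧ j = 1 then (0, 0)
  else if i = 0 ∧ j = 1 then (2, 2)
  else if i = 2 ∧ j = 2 then (0, 1)
  else if i = 0 ∧ j = 2 then (2, 1)
  else if i = 2 ∧ j = 1 then (0, 2)
  else if i = 1 ∧ j = 2 then (2, 0)
  else if i = 2 ∧ j = 0 then (1, 2)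
  else (1, 0)


def pOcore : ℕ → ℕ → ℕ × ℕ
  | 0, 0 => (1, 1)
  | 1, 1 => (0, 0)
  | 0, 1 => (2, 2)
  | 2, 2 => (0, 1)
  | 0, 2 => (2, 1)
  | 2, 1 => (0, 2)
  | 1, 2 => (2, 0)
  | 2, 0 => (1, 2)
  | _, _ => (1, 0)

lemma pO_r1e {m n i j : ℕ} (h : 3 ≤ i) (he : (i - 3) % 2 = 0) :
    pO m n i j = (i + 1, sm n j) := by simp [pO, h, he]

lemma pO_r1o {m n i j : ℕ} (h : 3 ≤ i) (he : (i - 3) % 2 = 1) :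
    pO m n i j = (i - 1, pm n j) := by
  have : ¬ (i - 3) % 2 = 0 := by omega
  simp [pO, h, this]

lemma pO_r2e {m n i j : ℕ} (hi : i < 3) (h : 3 ≤ j) (he : (j - 3) % 2 = 0) :
    pO m n i j = ((i + 1) % 3, j + 1) := by
  have : ¬ 3 ≤ i := by omega
  simp [pO, this, h, he]

lemma pO_r2o {m n i j : ℕ} (hi : i < 3) (h : 3 ≤ j) (he : (j - 3) % 2 = 1) :
    pO m n i j = ((i + 2) % 3, j - 1) := by
  have h1 : ¬ 3 ≤ i := by omega
  have h2 : ¬ (j - 3) % 2 = 0 := by omega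
  simp [pO, h1, h, h2]

lemma pO_core {m n i j : ℕ} (hi : i < 3) (hj : j < 3) :
    pO m n i j = pOcore i j := by
  interval_cases i <;> interval_cases j <;> simp [pO, pOcore]

lemma core_mem {i j : ℕ} (hi : i < 3) (hj : j < 3) :
    (pOcore i j).1 < 3 ∧ (pOcore i j).2 < 3 := by
  interval_cases i <;> interval_cases j <;> simp [pOcore]

lemma core_invol {i j : ℕ} (hi : i < 3) (hj : j < 3) :
    pOcore (pOcore i j).1 (pOcore i j).2 = (i, j) := by
  interval_cases i <;> interval_cases j <;> simp [pOcore]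

lemma core_diag {i j : ℕ} (hi : i < 3) (hj : j < 3) :
    (pOcore i j).1 ≠ i ∧ (pOcore i j).2 ≠ j ∨ pOcore i j = (i, j) := by
  interval_cases i <;> interval_cases j <;> simp [pOcore]

lemma core_fix {i j : ℕ} (hi : i < 3) (hj : j < 3) (h : pOcore i j = (i, j)) :
    i = 1 ∧ j = 0 := by
  interval_cases i <;> interval_cases j <;> simp_all [pOcore]

lemma pO_fix {m n i j : ℕ} (hi : i < m) (hj : j < n) (h : pO m n i j = (i, j)) :
    i = 1 ∧ j = 0 := by
  rcases le_or_gt 3 i with h1 | h1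
  · by_cases he : (i - 3) % 2 = 0
    · rw [pO_r1e h1 he] at h
      simp only [Prod.mk.injEq] at h
      omega
    · rw [pO_r1o h1 (by omega)] at h
      simp only [Prod.mk.injEq] at h
      omega
  · rcases le_or_gt 3 j with h2 | h2
    · by_cases he : (j - 3) % 2 = 0
      · rw [pO_r2e h1 h2 he] at h
        simp only [Prod.mk.injEq] at h
        omega
      · rw [pO_r2o h1 h2 (by omega)] at h
        simp only [Prod.mk.injEq] at h
        omega
    · rw [pO_core h1 h2] at h
      exact core_fix h1 h2 h

lemma good_pO {m n : ℕ} (hm3 : 3 ≤ m) (hmo : m % 2 = 1) (hn3 : 3 ≤ n) (hno : n % 2 = 1) :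
    Good m n (pO m n) := by
  have hn2 : 2 ≤ n := by omega
  refine ⟨?_, ?_, ?_, ?_⟩
  · intro i j hi hj
    rcases le_or_gt 3 i with h1 | h1
    · by_cases he : (i - 3) % 2 = 0
      · rw [pO_r1e h1 he]; exact ⟨by omega, sm_lt hj⟩
      · rw [pO_r1o h1 (by omega)]; exact ⟨by omega, pm_lt (by omega) hj⟩
    · rcases le_or_gt 3 j with h2 | h2
      · by_cases he : (j - 3) % 2 = 0
        · rw [pO_r2e h1 h2 he]; exact ⟨by omega, by omega⟩
        · rw [pO_r2o h1 h2 (by omega)]; exact ⟨by omega, by omega⟩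
      · rw [pO_core h1 h2]
        have := core_mem h1 h2
        exact ⟨by omega, by omega⟩
  · intro i j hi hj
    rcases le_or_gt 3 i with h1 | h1
    · by_cases he : (i - 3) % 2 = 0
      · rw [pO_r1e h1 he]; dsimp only
        rw [pO_r1o (by omega) (by omega)]
        simp only [Prod.mk.injEq, pm_sm hj]
        exact ⟨by omega, trivial⟩
      · rw [pO_r1o h1 (by omega)]; dsimp only
        rw [pO_r1e (by omega) (by omega)]
        simp only [Prod.mk.injEq, sm_pm hj hj.le]
        exact ⟨by omega, trivial⟩
    · rcases le_or_gt 3 j with h2 | h2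
      · by_cases he : (j - 3) % 2 = 0
        · rw [pO_r2e h1 h2 he]; dsimp only
          rw [pO_r2o (by omega) (by omega) (by omega)]
          simp only [Prod.mk.injEq]
          omega
        · rw [pO_r2o h1 h2 (by omega)]; dsimp only
          rw [pO_r2e (by omega) (by omega) (by omega)]
          simp only [Prod.mk.injEq]
          omega
      · rw [pO_core h1 h2]
        have hmem := core_mem h1 h2
        rw [pO_core hmem.1 hmem.2]
        exact core_invol h1 h2
  · intro i j hi hj
    rcases le_or_gt 3 i with h1 | h1
    · by_cases he : (i - 3) % 2 = 0
      · rw [pO_r1e h1 he]; exact Or.inl ⟨by omega, sm_ne hj hn2⟩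
      · rw [pO_r1o h1 (by omega)]; exact Or.inl ⟨by omega, pm_ne hj hn2⟩
    · rcases le_or_gt 3 j with h2 | h2
      · by_cases he : (j - 3) % 2 = 0
        · rw [pO_r2e h1 h2 he]; exact Or.inl ⟨by omega, by omega⟩
        · rw [pO_r2o h1 h2 (by omega)]; exact Or.inl ⟨by omega, by omega⟩
      · rw [pO_core h1 h2]; exact core_diag h1 h2
  · intro i j i' j' hi hj hi' hj' h h'
    have a := pO_fix hi hj h
    have b := pO_fix hi' hj' h'
    omega

open Finset in
lemma exists_coloring {α : Type*} [Fintype α] [DecidableEq α] (q : α → α) (K : ℕ)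
    (hK : Fintype.card α ≤ 2 * K)
    (hinv : ∀ x, q (q x) = x) (hfix : ∀ x y, q x = x → q y = y → x = y) :
    ∃ c : α → Fin K, ∀ x y, c x = c y → y = x ∨ y = q x := by
  classical
  let e := Fintype.equivFin α
  let code : α → ℕ := fun x => (e x : ℕ)
  have hcode : ∀ a b, code a = code b → a = b := fun a b h => e.injective (Fin.val_injective h)
  have hqinj : Function.Injective q := fun a b h => by
    have h2 := congrArg q h; rwa [hinv, hinv] at h2
  set R : Finset α := Finset.univ.filter (fun x => code x ≤ code (q x)) with hR
  set Rs : Finset α := Finset.univ.filter (fun x => code x < code (q x)) with hRs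
  set Rc : Finset α := Finset.univ.filter (fun x => code (q x) < code x) with hRc
  set F : Finset α := Finset.univ.filter (fun x => q x = x) with hF
  have hRcIm : Rc = Rs.image q := by
    ext y
    simp only [hRc, hRs, Finset.mem_filter, Finset.mem_univ, true_and, Finset.mem_image]
    constructor
    · intro hy
      exact ⟨q y, by rw [hinv]; exact hy, hinv y⟩
    · rintro ⟨x, hx, rfl⟩
      rwa [hinv]
  have hcard1 : Rs.card = Rc.card := by
    rw [hRcIm, Finset.card_image_of_injective _ hqinj]
  have hsplit : R.card + Rc.card = Fintype.card α := by
    have := Finset.card_filter_add_card_filter_not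
      (s := (Finset.univ : Finset α)) (p := fun x => code x ≤ code (q x))
    rw [hR, hRc]
    rw [← Finset.card_univ]
    convert this using 3
    ext x
    simp only [Finset.mem_filter, Finset.mem_univ, true_and]
    omega
  have hRsplit : R.card = Rs.card + F.card := by
    have hdisj : Disjoint Rs F := by
      rw [Finset.disjoint_left]
      intro a ha haF
      simp only [hRs, hF, Finset.mem_filter, Finset.mem_univ, true_and] at ha haF
      rw [haF] at ha; omega
    rw [← Finset.card_union_of_disjoint hdisj]
    congr 1
    ext x
    simp only [hR, hRs, hF, Finset.mem_filter, Finset.mem_univ, true_and, Finset.mem_union]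
    constructor
    · intro hx
      rcases eq_or_lt_of_le hx with hx' | hx'
      · exact Or.inr (hcode _ _ hx'.symm)
      · exact Or.inl hx'
    · rintro (hx | hx)
      · exact hx.le
      · rw [hx]
  have hFle : F.card ≤ 1 := by
    rw [Finset.card_le_one]
    intro a ha b hb
    simp only [hF, Finset.mem_filter, Finset.mem_univ, true_and] at ha hb
    exact hfix a b ha hb
  have hRK : R.card ≤ K := by omega
  have hemb : Fintype.card {x // x ∈ R} ≤ Fintype.card (Fin K) := by
    rwa [Fintype.card_coe, Fintype.card_fin]
  obtain ⟨f⟩ := Function.Embedding.nonempty_of_card_le hemb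
  have hrep : ∀ x : α, (if code x ≤ code (q x) then x else q x) ∈ R := by
    intro x
    simp only [hR, Finset.mem_filter, Finset.mem_univ, true_and]
    split
    · assumption
    · rw [hinv]; omega
  refine ⟨fun x => f ⟨if code x ≤ code (q x) then x else q x, hrep x⟩, ?_⟩
  intro x y hxy
  have h2 : (if code x ≤ code (q x) then x else q x) = (if code y ≤ code (q y) then y else q y) := by
    have := f.injective hxy
    exact Subtype.ext_iff.mp this
  split at h2 <;> split at h2
  · exact Or.inl h2.symm
  · exact Or.inr (by rw [h2, hinv])
  · exact Or.inr h2.symm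
  · exact Or.inl (hqinj h2.symm)

lemma good_transpose {m n : ℕ} {p : ℕ → ℕ → ℕ × ℕ} (hp : Good n m p) :
    Good m n (fun i j => ((p j i).2, (p j i).1)) := by
  obtain ⟨h1, h2, h3, h4⟩ := hp
  refine ⟨?_, ?_, ?_, ?_⟩
  · intro i j hi hj; exact ⟨(h1 j i hj hi).2, (h1 j i hj hi).1⟩
  · intro i j hi hj
    dsimp only
    rw [h2 j i hj hi]
  · intro i j hi hj
    rcases h3 j i hj hi with h | h
    · exact Or.inl ⟨h.2, h.1⟩
    · right; dsimp only; rw [h]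
  · intro i j i' j' hi hj hi' hj' hh hh'
    dsimp only at hh hh'
    have e1 : p j i = (j, i) :=
      Prod.ext_iff.mpr ⟨by simpa using congrArg Prod.snd hh, by simpa using congrArg Prod.fst hh⟩
    have e2 : p j' i' = (j', i') :=
      Prod.ext_iff.mpr ⟨by simpa using congrArg Prod.snd hh', by simpa using congrArg Prod.fst hh'⟩
    have := h4 j i j' i' hj hi hj' hi' e1 e2
    exact ⟨this.2, this.1⟩

lemma exists_good {m n : ℕ} (hm : 2 ≤ m) (hn : 2 ≤ n) : ∃ p, Good m n p := by
  rcases Nat.even_or_odd m with he | ho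
  · exact ⟨pE m n, good_pE hm (Nat.even_iff.mp he) hn⟩
  · rcases Nat.even_or_odd n with he' | ho'
    · exact ⟨fun i j => ((pE n m j i).2, (pE n m j i).1),
        good_transpose (good_pE hn (Nat.even_iff.mp he') hm)⟩
    · have hmo := Nat.odd_iff.mp ho
      have hno := Nat.odd_iff.mp ho'
      exact ⟨pO m n, good_pO (by omega) hmo (by omega) hno⟩

/-! ### Graph side -/

def toEdge {m n : ℕ} (x : Fin m × Fin n) :
    (completeBipartiteGraph (Fin m) (Fin n)).edgeSet :=
  ⟨s(Sum.inl x.1, Sum.inr x.2), by simp⟩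

lemma toEdge_val {m n : ℕ} (x : Fin m × Fin n) :
    (toEdge x : Sym2 (Fin m ⊕ Fin n)) = s(Sum.inl x.1, Sum.inr x.2) := rfl

lemma toEdge_inj {m n : ℕ} : Function.Injective (toEdge (m := m) (n := n)) := by
  intro x y h
  have h' : s(Sum.inl x.1, Sum.inr x.2) = s(Sum.inl y.1, Sum.inr y.2) := congrArg Subtype.val h
  rw [Sym2.eq_iff] at h'
  rcases h' with ⟨h1, h2⟩ | ⟨h1, h2⟩
  · exact Prod.ext_iff.mpr ⟨Sum.inl.inj h1, Sum.inr.inj h2⟩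
  · exact absurd h1 (by simp)

lemma toEdge_surj {m n : ℕ} : Function.Surjective (toEdge (m := m) (n := n)) := by
  rintro ⟨e, he⟩
  induction e using Sym2.ind with
  | _ u v =>
    rw [SimpleGraph.mem_edgeSet] at he
    rcases u with a | b <;> rcases v with a' | b'
    · simp at he
    · exact ⟨(a, b'), rfl⟩
    · exact ⟨(a', b), Subtype.ext Sym2.eq_swap⟩
    · simp at he

lemma edgeAdj_iff {m n : ℕ} (x y : Fin m × Fin n) :
    EdgeAdj (completeBipartiteGraph (Fin m) (Fin n)) (toEdge x) (toEdge y) ↔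
      x ≠ y ∧ (x.1 = y.1 ∨ x.2 = y.2) := by
  constructor
  · rintro ⟨hne, v, hv1, hv2⟩
    refine ⟨fun h => hne (congrArg _ h), ?_⟩
    rw [toEdge_val, Sym2.mem_iff] at hv1 hv2
    rcases hv1 with rfl | rfl <;> rcases hv2 with h | h
    · exact Or.inl (Sum.inl.inj h)
    · exact absurd h (by simp)
    · exact absurd h (by simp)
    · exact Or.inr (Sum.inr.inj h)
  · rintro ⟨hne, h | h⟩
    · refine ⟨fun hc => hne (toEdge_inj hc), Sum.inl x.1, ?_, ?_⟩ <;>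
        rw [toEdge_val, Sym2.mem_iff]
      · exact Or.inl rfl
      · exact Or.inl (by rw [h])
    · refine ⟨fun hc => hne (toEdge_inj hc), Sum.inr x.2, ?_, ?_⟩ <;>
        rw [toEdge_val, Sym2.mem_iff]
      · exact Or.inr rfl
      · exact Or.inr (by rw [h])

lemma upper {m n : ℕ} (hm : 2 ≤ m) (hn : 2 ≤ n) :
    ∃ c : (completeBipartiteGraph (Fin m) (Fin n)).edgeSet → Fin ((m * n + 1) / 2),
      IsDomEdgeColoring (completeBipartiteGraph (Fin m) (Fin n)) c := by
  classical
  obtain ⟨p, hmem, hinv, hdiag, hfix⟩ := exists_good hm hn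
  let q : Fin m × Fin n → Fin m × Fin n := fun x =>
    (⟨(p x.1 x.2).1, (hmem x.1 x.2 x.1.2 x.2.2).1⟩,
     ⟨(p x.1 x.2).2, (hmem x.1 x.2 x.1.2 x.2.2).2⟩)
  have hqinv : ∀ x, q (q x) = x := by
    intro x
    have h := hinv x.1 x.2 x.1.2 x.2.2
    apply Prod.ext_iff.mpr
    constructor
    · apply Fin.ext
      show (p (p ↑x.1 ↑x.2).1 (p ↑x.1 ↑x.2).2).1 = ↑x.1
      rw [h]
    · apply Fin.ext
      show (p (p ↑x.1 ↑x.2).1 (p ↑x.1 ↑x.2).2).2 = ↑x.2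
      rw [h]
  have hqfixval : ∀ x : Fin m × Fin n, q x = x → p ↑x.1 ↑x.2 = (↑x.1, ↑x.2) := by
    intro x hx
    have h1 := congrArg (fun y : Fin m × Fin n => (y.1 : ℕ)) hx
    have h2 := congrArg (fun y : Fin m × Fin n => (y.2 : ℕ)) hx
    exact Prod.ext_iff.mpr ⟨h1, h2⟩
  have hqfix : ∀ x y, q x = x → q y = y → x = y := by
    intro x y hx hy
    have := hfix ↑x.1 ↑x.2 ↑y.1 ↑y.2 x.1.2 x.2.2 y.1.2 y.2.2 (hqfixval x hx) (hqfixval y hy)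
    exact Prod.ext_iff.mpr ⟨Fin.ext this.1, Fin.ext this.2⟩
  have hqdiag : ∀ x, ((q x).1 ≠ x.1 ∧ (q x).2 ≠ x.2) ∨ q x = x := by
    intro x
    rcases hdiag ↑x.1 ↑x.2 x.1.2 x.2.2 with h | h
    · exact Or.inl ⟨fun hc => h.1 (congrArg Fin.val hc), fun hc => h.2 (congrArg Fin.val hc)⟩
    · right
      refine Prod.ext_iff.mpr ⟨Fin.ext ?_, Fin.ext ?_⟩
      · show (p ↑x.1 ↑x.2).1 = ↑x.1
        rw [h]
      · show (p ↑x.1 ↑x.2).2 = ↑x.2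
        rw [h]
  have hK : Fintype.card (Fin m × Fin n) ≤ 2 * ((m * n + 1) / 2) := by
    rw [Fintype.card_prod, Fintype.card_fin, Fintype.card_fin]
    omega
  obtain ⟨c0, hc0⟩ := exists_coloring q ((m * n + 1) / 2) hK hqinv hqfix
  let E : (Fin m × Fin n) ≃ (completeBipartiteGraph (Fin m) (Fin n)).edgeSet :=
    Equiv.ofBijective toEdge ⟨toEdge_inj, toEdge_surj⟩
  have hEt : ∀ e, toEdge (E.symm e) = e := fun e => E.apply_symm_apply e
  refine ⟨fun e => c0 (E.symm e), ?_, ?_⟩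
  · intro e f hadj hceq
    rw [← hEt e, ← hEt f, edgeAdj_iff] at hadj
    obtain ⟨hne, hor⟩ := hadj
    rcases hc0 _ _ hceq with h | h
    · exact hne h.symm
    · rcases hqdiag (E.symm e) with ⟨hd1, hd2⟩ | hfx
      · rw [h] at hor
        rcases hor with h1 | h1
        · exact hd1 h1.symm
        · exact hd2 h1.symm
      · rw [hfx] at h
        exact hne h.symm
  · intro i
    by_cases hex : ∃ f : (completeBipartiteGraph (Fin m) (Fin n)).edgeSet, c0 (E.symm f) = i
    · obtain ⟨f₀, hf₀⟩ := hex
      have hclass : ∀ f, c0 (E.symm f) = i → E.symm f = E.symm f₀ ∨ E.symm f = q (E.symm f₀) :=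
        fun f hf => hc0 (E.symm f₀) (E.symm f) (by rw [hf₀, hf])
      have htoE : ∀ (f : (completeBipartiteGraph (Fin m) (Fin n)).edgeSet) (z),
          E.symm f = z → f = toEdge z := by
        intro f z hz
        rw [← hEt f, hz]
      rcases hqdiag (E.symm f₀) with ⟨hd1, hd2⟩ | hfx
      · refine ⟨toEdge ((E.symm f₀).1, (q (E.symm f₀)).2), fun f hf => Or.inr ?_⟩
        rcases hclass f hf with h | h
        · rw [htoE f _ h, edgeAdj_iff]
          exact ⟨fun hcn => hd2 (Prod.ext_iff.mp hcn).2, Or.inl rfl⟩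
        · rw [htoE f _ h, edgeAdj_iff]
          exact ⟨fun hcn => hd1 (Prod.ext_iff.mp hcn).1.symm, Or.inr rfl⟩
      · refine ⟨f₀, fun f hf => Or.inl ?_⟩
        rcases hclass f hf with h | h
        · rw [htoE f _ h]
          exact hEt f₀
        · rw [hfx] at h
          rw [htoE f _ h]
          exact hEt f₀
    · refine ⟨toEdge (⟨0, by omega⟩, ⟨0, by omega⟩), fun f hf => absurd ⟨f, hf⟩ hex⟩

lemma lower {m n k : ℕ}
    (c : (completeBipartiteGraph (Fin m) (Fin n)).edgeSet → Fin k)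
    (hc : IsDomEdgeColoring (completeBipartiteGraph (Fin m) (Fin n)) c) :
    m * n ≤ 2 * k := by
  classical
  let c' : Fin m × Fin n → Fin k := fun x => c (toEdge x)
  have hprop : ∀ u v : Fin m × Fin n, u ≠ v → c' u = c' v → u.1 ≠ v.1 ∧ u.2 ≠ v.2 := by
    intro u v huv heq
    by_contra hcon
    rw [not_and_or, not_ne_iff, not_ne_iff] at hcon
    exact hc.1 _ _ ((edgeAdj_iff u v).mpr ⟨huv, hcon⟩) heq
  have hfib : ∀ i : Fin k, (Finset.univ.filter (fun x => c' x = i)).card ≤ 2 := by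
    intro i
    by_contra hgt
    push_neg at hgt
    obtain ⟨x, y, z, hx, hy, hz, hxy, hxz, hyz⟩ := Finset.two_lt_card_iff.mp hgt
    simp only [Finset.mem_filter, Finset.mem_univ, true_and] at hx hy hz
    obtain ⟨d, hd⟩ := hc.2 i
    obtain ⟨w, rfl⟩ := toEdge_surj d
    have key : ∀ u : Fin m × Fin n, c' u = i → u.1 = w.1 ∨ u.2 = w.2 := by
      intro u hu
      rcases hd (toEdge u) hu with h | h
      · have huw : u = w := toEdge_inj h
        exact Or.inl (by rw [huw])
      · rw [edgeAdj_iff] at h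
        rcases h.2 with h' | h'
        · exact Or.inl h'.symm
        · exact Or.inr h'.symm
    rcases key x hx with p1 | p1 <;> rcases key y hy with p2 | p2 <;>
      rcases key z hz with p3 | p3 <;>
      first
      | exact (hprop x y hxy (by rw [hx, hy])).1 (p1.trans p2.symm)
      | exact (hprop x z hxz (by rw [hx, hz])).1 (p1.trans p3.symm)
      | exact (hprop y z hyz (by rw [hy, hz])).1 (p2.trans p3.symm)
      | exact (hprop x y hxy (by rw [hx, hy])).2 (p1.trans p2.symm)
      | exact (hprop x z hxz (by rw [hx, hz])).2 (p1.trans p3.symm)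
      | exact (hprop y z hyz (by rw [hy, hz])).2 (p2.trans p3.symm)
  have hcount := Finset.card_eq_sum_card_fiberwise
    (f := c') (s := Finset.univ) (t := Finset.univ) (fun x _ => Finset.mem_univ _)
  have hle : (Finset.univ : Finset (Fin m × Fin n)).card ≤ ∑ _i : Fin k, 2 := by
    rw [hcount]
    exact Finset.sum_le_sum fun i _ => hfib i
  have h2 : m * n ≤ k * 2 := by simpa using hle
  omega

end DomBip

/-- For `m, n ≥ 2`, `χ'_dom(K_{m,n}) = ⌈mn/2⌉`. -/
theorem stmt_5 (m n : ℕ) (hm : 2 ≤ m) (hn : 2 ≤ n) :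
    domEdgeChrom (completeBipartiteGraph (Fin m) (Fin n)) = (m * n + 1) / 2 := by
  have hub := DomBip.upper hm hn
  unfold domEdgeChrom
  apply le_antisymm
  · exact Nat.sInf_le hub
  · refine le_csInf ⟨_, hub⟩ ?_
    rintro k ⟨c, hck⟩
    have := DomBip.lower c hck
    omega
end

section
/- For every natural number n ≥ 4, the dominated edge chromatic number of the wheel graph W_n on n vertices (the join of a single vertex with the cycle C_{n-1}) equals n - 1. -/
open SimpleGraph

/-- The join `G + H` of two graphs: disjoint union together with all edges between them. -/
def graphJoin {α β : Type*} (G : SimpleGraph α) (H : SimpleGraph β) :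
    SimpleGraph (α ⊕ β) :=
  SimpleGraph.fromRel (fun a b =>
    match a, b with
    | .inl u, .inl v => G.Adj u v
    | .inr u, .inr v => H.Adj u v
    | .inl _, .inr _ => True
    | .inr _, .inl _ => False)

/-!
The `n - 1` spokes of `W_n` pairwise share the hub, so every proper edge coloring uses at least
`n - 1` colors. Conversely, indexing the rim by `Fin (n - 1)` with its cyclic addition, color
spoke `i` by `i` and rim edge `{i, i + 1}` by `i + 2`. Since `n - 1 ≥ 3`, the
color `i + 2` differs from `i` and `i + 1`, so the coloring is proper, and the class of color `k`,
`{spoke k, rim edge {k - 2, k - 1}}`, is dominated by spoke `k - 1`.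
-/

section EdgeColoring

variable {V : Type*} {G : SimpleGraph V}

lemma EdgeAdj.symm {e f : G.edgeSet} (h : EdgeAdj G e f) : EdgeAdj G f e :=
  ⟨h.1.symm, h.2.imp fun _ ↦ And.symm⟩

lemma card_le_of_forall_mem_of_proper {k : ℕ} {c : G.edgeSet → Fin k}
    (hc : ∀ e f, EdgeAdj G e f → c e ≠ c f) {ι : Type*} [Fintype ι] {s : ι → G.edgeSet}
    (hs : Function.Injective s) (v : V) (hv : ∀ i, v ∈ (s i : Sym2 V)) :
    Fintype.card ι ≤ k := by
  have hinj : Function.Injective (c ∘ s) := by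
    intro i j hij
    by_contra hne
    exact hc _ _ ⟨hs.ne hne, v, hv i, hv j⟩ hij
  simpa using Fintype.card_le_of_injective _ hinj

lemma domEdgeChrom_eq {k : ℕ} (c : G.edgeSet → Fin k) (hc : IsDomEdgeColoring G c)
    (hle : ∀ j (d : G.edgeSet → Fin j), IsDomEdgeColoring G d → k ≤ j) :
    domEdgeChrom G = k :=
  le_antisymm (Nat.sInf_le ⟨c, hc⟩) (le_csInf ⟨k, c, hc⟩ fun j ⟨d, hd⟩ ↦ hle j d hd)

end EdgeColoring

section GraphJoin

variable {α β : Type*} {G : SimpleGraph α} {H : SimpleGraph β}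

@[simp]
lemma graphJoin_adj_inl_inl {u v : α} : (graphJoin G H).Adj (.inl u) (.inl v) ↔ G.Adj u v :=
  ⟨fun ⟨_, h⟩ ↦ h.elim id fun h ↦ G.adj_symm h, fun h ↦ ⟨by simpa using h.ne, .inl h⟩⟩

@[simp]
lemma graphJoin_adj_inr_inr {u v : β} : (graphJoin G H).Adj (.inr u) (.inr v) ↔ H.Adj u v :=
  ⟨fun ⟨_, h⟩ ↦ h.elim id fun h ↦ H.adj_symm h, fun h ↦ ⟨by simpa using h.ne, .inl h⟩⟩

@[simp]
lemma graphJoin_adj_inl_inr (u : α) (v : β) : (graphJoin G H).Adj (.inl u) (.inr v) := by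
  simp [graphJoin]

end GraphJoin

namespace Wheel

/-- The wheel `W_{m+4}`, with hub `.inl 0` and rim `cycleGraph (m + 3)`. -/
abbrev wheel (m : ℕ) : SimpleGraph (Fin 1 ⊕ Fin (m + 3)) :=
  graphJoin ⊤ (cycleGraph (m + 3))

variable {m : ℕ}

lemma fin_two_ne_zero : (2 : Fin (m + 3)) ≠ 0 := by
  simp [Fin.ext_iff, Nat.mod_eq_of_lt (show 2 < m + 3 by omega)]

lemma fin_two_ne_one : (2 : Fin (m + 3)) ≠ 1 := by
  simp [Fin.ext_iff, Nat.mod_eq_of_lt (show 2 < m + 3 by omega)]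

lemma fin_one_add_one : (1 : Fin (m + 3)) + 1 = 2 := by
  simp [Fin.ext_iff, Fin.val_add, Nat.mod_eq_of_lt (show 2 < m + 3 by omega)]

lemma ne_add_two (i : Fin (m + 3)) : i ≠ i + 2 :=
  fun h ↦ fin_two_ne_zero (left_eq_add.mp h)

lemma add_one_ne_add_two (i : Fin (m + 3)) : i + 1 ≠ i + 2 :=
  fun h ↦ fin_two_ne_one (add_left_cancel h).symm

def spoke (i : Fin (m + 3)) : (wheel m).edgeSet :=
  ⟨s(.inl 0, .inr i), by simp⟩

def rim (i : Fin (m + 3)) : (wheel m).edgeSet :=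
  ⟨s(.inr i, .inr (i + 1)), by simp [cycleGraph_adj]⟩

lemma spoke_injective : Function.Injective (spoke (m := m)) := fun _ _ h ↦ by
  simpa [spoke] using h

lemma exists_eq_spoke_or_eq_rim (e : (wheel m).edgeSet) : (∃ i, e = spoke i) ∨ (∃ i, e = rim i) := by
  obtain ⟨e, he⟩ := e
  induction e with
  | h a b =>
    rw [mem_edgeSet] at he
    rcases a with x | i <;> rcases b with y | j
    · exact absurd (Subsingleton.elim x y) (by simpa using he)
    · exact .inl ⟨j, by simp [spoke, Subsingleton.elim x 0]⟩
    · exact .inl ⟨i, by simp [spoke, Subsingleton.elim y 0, Sym2.eq_swap]⟩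
    · right
      rcases cycleGraph_adj.mp (graphJoin_adj_inr_inr.mp he) with h | h
      · rw [sub_eq_iff_eq_add'] at h
        exact ⟨j, by simp [rim, h, Sym2.eq_swap]⟩
      · rw [sub_eq_iff_eq_add'] at h
        exact ⟨i, by simp [rim, h]⟩

lemma eq_or_eq_add_one_of_edgeAdj_spoke_rim {i j : Fin (m + 3)}
    (h : EdgeAdj (wheel m) (spoke j) (rim i)) : j = i ∨ j = i + 1 := by
  obtain ⟨-, v, hs, hr⟩ := h
  simp only [spoke, rim, Sym2.mem_iff] at hs hr
  rcases hs with rfl | rfl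
  · simp at hr
  · simpa using hr

lemma edgeAdj_spoke_spoke {i j : Fin (m + 3)} (h : i ≠ j) :
    EdgeAdj (wheel m) (spoke i) (spoke j) :=
  ⟨spoke_injective.ne h, .inl 0, by simp [spoke], by simp [spoke]⟩

lemma edgeAdj_spoke_add_one_rim (i : Fin (m + 3)) :
    EdgeAdj (wheel m) (spoke (i + 1)) (rim i) :=
  ⟨by simp [spoke, rim], .inr (i + 1), by simp [spoke], by simp [rim]⟩

-- Pairs that are not edges get the junk color `0`.
def pairColor : Fin 1 ⊕ Fin (m + 3) → Fin 1 ⊕ Fin (m + 3) → Fin (m + 3)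
  | .inl _, .inl _ => 0
  | .inl _, .inr i | .inr i, .inl _ => i
  | .inr i, .inr j => if j = i + 1 then i + 2 else if i = j + 1 then j + 2 else 0

lemma pairColor_comm (a b : Fin 1 ⊕ Fin (m + 3)) : pairColor a b = pairColor b a := by
  rcases a with _ | i <;> rcases b with _ | j <;> simp only [pairColor]
  split_ifs with hji hij <;> try rfl
  exact (ne_add_two j (by rw [← fin_one_add_one, ← add_assoc, ← hij, ← hji])).elim

def color (e : (wheel m).edgeSet) : Fin (m + 3) :=
  Sym2.lift ⟨pairColor, pairColor_comm⟩ e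

@[simp]
lemma color_spoke (i : Fin (m + 3)) : color (spoke i) = i := by
  simp [color, spoke, pairColor]

@[simp]
lemma color_rim (i : Fin (m + 3)) : color (rim i) = i + 2 := by
  simp [color, rim, pairColor]

lemma color_ne_of_edgeAdj_spoke_rim {i j : Fin (m + 3)}
    (h : EdgeAdj (wheel m) (spoke j) (rim i)) : color (spoke j) ≠ color (rim i) := by
  rcases eq_or_eq_add_one_of_edgeAdj_spoke_rim h with rfl | rfl
  · simpa using ne_add_two j
  · simpa using add_one_ne_add_two i

lemma color_proper (e f : (wheel m).edgeSet) (h : EdgeAdj (wheel m) e f) :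
    color e ≠ color f := by
  rcases exists_eq_spoke_or_eq_rim e with ⟨i, rfl⟩ | ⟨i, rfl⟩ <;> rcases exists_eq_spoke_or_eq_rim f with ⟨j, rfl⟩ | ⟨j, rfl⟩
  · exact fun hc ↦ h.1 (congrArg spoke (by simpa using hc))
  · exact color_ne_of_edgeAdj_spoke_rim h
  · exact (color_ne_of_edgeAdj_spoke_rim h.symm).symm
  · exact fun hc ↦ h.1 (congrArg rim (by simpa using hc))

lemma color_dominated (k : Fin (m + 3)) :
    ∃ e, ∀ f, color f = k → f = e ∨ EdgeAdj (wheel m) e f := by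
  refine ⟨spoke (k - 1), fun f hf ↦ .inr ?_⟩
  rcases exists_eq_spoke_or_eq_rim f with ⟨i, rfl⟩ | ⟨i, rfl⟩ <;> simp only [color_spoke, color_rim] at hf
  · subst hf
    exact edgeAdj_spoke_spoke (by simp)
  · rw [← hf, ← fin_one_add_one, ← add_assoc, add_sub_cancel_right]
    exact edgeAdj_spoke_add_one_rim i

lemma isDomEdgeColoring_color : IsDomEdgeColoring (wheel m) color :=
  ⟨color_proper, color_dominated⟩

lemma le_of_isDomEdgeColoring {k : ℕ} {c : (wheel m).edgeSet → Fin k}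
    (hc : IsDomEdgeColoring (wheel m) c) : m + 3 ≤ k := by
  simpa using card_le_of_forall_mem_of_proper hc.1 spoke_injective (.inl 0) (by simp [spoke])

end Wheel

/-- For `n ≥ 4`, the wheel `W_n = K_1 + C_{n-1}` has `χ'_dom(W_n) = n - 1`. -/
theorem stmt_6 (n : ℕ) (hn : 4 ≤ n) :
    domEdgeChrom (graphJoin (⊤ : SimpleGraph (Fin 1)) (SimpleGraph.cycleGraph (n - 1))) =
      n - 1 := by
  obtain ⟨m, hm⟩ : ∃ m, n - 1 = m + 3 := ⟨n - 4, by omega⟩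
  rw [hm]
  exact domEdgeChrom_eq Wheel.color Wheel.isDomEdgeColoring_color
    fun _ _ ↦ Wheel.le_of_isDomEdgeColoring
end

section
/- For every natural number n ≥ 2, the dominated edge chromatic number of the friendship graph F_n equals 2n. -/
open SimpleGraph

/-- The graph `nK₂`: the disjoint union of `n` copies of `K₂`. -/
def nK2 (n : ℕ) : SimpleGraph (Fin n × Fin 2) :=
  SimpleGraph.fromRel (fun a b => a.1 = b.1)

section FriendshipAux

variable {n : ℕ}

private lemma Gadj (a b : Fin 1 ⊕ Fin n × Fin 2) :
    (graphJoin (⊤ : SimpleGraph (Fin 1)) (nK2 n)).Adj a b ↔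
      ((∃ w, a = .inl 0 ∧ b = .inr w) ∨ (∃ w, a = .inr w ∧ b = .inl 0) ∨
       (∃ u v : Fin n × Fin 2, a = .inr u ∧ b = .inr v ∧ u.1 = v.1 ∧ u.2 ≠ v.2)) := by
  rcases a with u | u <;> rcases b with v | v <;>
    simp [graphJoin, nK2, SimpleGraph.fromRel_adj]
  case inl.inl => exact fun h => absurd (Subsingleton.elim u v) h
  case inl.inr => exact Fin.eq_zero u
  case inr.inl => exact Fin.eq_zero v
  case inr.inr =>
    constructor
    · rintro ⟨hne, h⟩
      have h1 : u.1 = v.1 := by tauto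
      exact ⟨h1, fun h2 => hne (Prod.ext h1 h2)⟩
    · rintro ⟨h1, h2⟩
      have hne : u ≠ v := fun h => h2 (congrArg Prod.snd h)
      exact ⟨hne, Or.inl ⟨hne, Or.inl h1⟩⟩

private lemma edge_cases (e : Sym2 (Fin 1 ⊕ Fin n × Fin 2))
    (he : e ∈ (graphJoin (⊤ : SimpleGraph (Fin 1)) (nK2 n)).edgeSet) :
    (∃ w, e = s(.inl 0, .inr w)) ∨
      (∃ (i : Fin n) (a b : Fin 2), a ≠ b ∧ e = s(.inr (i, a), .inr (i, b))) := by
  induction e using Sym2.ind with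
  | _ x y =>
    rw [SimpleGraph.mem_edgeSet, Gadj] at he
    rcases he with ⟨w, rfl, rfl⟩ | ⟨w, rfl, rfl⟩ | ⟨u, v, rfl, rfl, h1, h2⟩
    · exact Or.inl ⟨w, rfl⟩
    · exact Or.inl ⟨w, Sym2.eq_swap⟩
    · refine Or.inr ⟨u.1, u.2, v.2, h2, ?_⟩
      have hv : v = (u.1, v.2) := Prod.ext h1.symm rfl
      rw [← hv, Prod.mk.eta]

private def fcol (n : ℕ) (hn : 0 < n) : (Fin 1 ⊕ Fin n × Fin 2) → (Fin 1 ⊕ Fin n × Fin 2) → Fin (2 * n)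
  | .inl _, .inl _ => ⟨0, by omega⟩
  | .inl _, .inr w => ⟨2 * w.1.val + w.2.val, by have := w.1.isLt; have := w.2.isLt; omega⟩
  | .inr w, .inl _ => ⟨2 * w.1.val + w.2.val, by have := w.1.isLt; have := w.2.isLt; omega⟩
  | .inr u, .inr v => ⟨2 * ((min u.1.val v.1.val + 1) % n),
      by have := Nat.mod_lt (min u.1.val v.1.val + 1) hn; omega⟩

private lemma fcol_symm (n : ℕ) (hn : 0 < n) (a b : Fin 1 ⊕ Fin n × Fin 2) :
    fcol n hn a b = fcol n hn b a := by
  rcases a with u | u <;> rcases b with v | v <;> simp [fcol, Nat.min_comm]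

private noncomputable def col (hn : 0 < n)
    (e : (graphJoin (⊤ : SimpleGraph (Fin 1)) (nK2 n)).edgeSet) : Fin (2 * n) :=
  Sym2.lift ⟨fcol n hn, fcol_symm n hn⟩ e.val

private lemma col_spoke (hn : 0 < n) (w : Fin n × Fin 2)
    (h : s(.inl 0, .inr w) ∈ (graphJoin (⊤ : SimpleGraph (Fin 1)) (nK2 n)).edgeSet) :
    (col hn ⟨_, h⟩).val = 2 * w.1.val + w.2.val := rfl

private lemma col_tri (hn : 0 < n) (i : Fin n) (a b : Fin 2)
    (h : s(.inr (i, a), .inr (i, b)) ∈ (graphJoin (⊤ : SimpleGraph (Fin 1)) (nK2 n)).edgeSet) :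
    (col hn ⟨_, h⟩).val = 2 * ((i.val + 1) % n) := by
  show 2 * ((min i.val i.val + 1) % n) = _
  rw [Nat.min_self]
private lemma spoke_mem (w : Fin n × Fin 2) :
    s(.inl 0, .inr w) ∈ (graphJoin (⊤ : SimpleGraph (Fin 1)) (nK2 n)).edgeSet := by
  rw [SimpleGraph.mem_edgeSet, Gadj]; exact Or.inl ⟨w, rfl, rfl⟩

private lemma key (hn2 : 2 ≤ n) (j c : ℕ) (hj : j < n) (hc : c < 2) :
    2 * j + c ≠ 2 * ((j + 1) % n) := by
  rcases Nat.lt_or_ge (j + 1) n with h | h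
  · rw [Nat.mod_eq_of_lt h]; omega
  · have hjn : j + 1 = n := by omega
    rw [hjn, Nat.mod_self]; omega

private lemma tri_eq (i : Fin n) (a b a' b' : Fin 2) (hab : a ≠ b) (hab' : a' ≠ b') :
    s(Sum.inr (i, a), Sum.inr (i, b)) =
      (s(Sum.inr (i, a'), Sum.inr (i, b')) : Sym2 (Fin 1 ⊕ Fin n × Fin 2)) := by
  have h1 : a.val ≠ b.val := fun h => hab (Fin.ext h)
  have h2 : a'.val ≠ b'.val := fun h => hab' (Fin.ext h)
  have := a.isLt; have := b.isLt; have := a'.isLt; have := b'.isLt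
  have : (a.val = a'.val ∧ b.val = b'.val) ∨ (a.val = b'.val ∧ b.val = a'.val) := by omega
  rcases this with ⟨e1, e2⟩ | ⟨e1, e2⟩
  · rw [Fin.ext e1, Fin.ext e2]
  · rw [Fin.ext e1, Fin.ext e2, Sym2.eq_swap]

private lemma col_proper (hn2 : 2 ≤ n) (hn : 0 < n) :
    ∀ e f, EdgeAdj (graphJoin (⊤ : SimpleGraph (Fin 1)) (nK2 n)) e f →
      col hn e ≠ col hn f := by
  rintro ⟨e, he⟩ ⟨f, hf⟩ ⟨hne, v, hv1, hv2⟩ hcol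
  have hnev : e ≠ f := fun h => hne (Subtype.ext h)
  have hcolv := congrArg Fin.val hcol
  rcases edge_cases e he with ⟨w, rfl⟩ | ⟨i, a, b, hab, rfl⟩ <;>
    rcases edge_cases f hf with ⟨w', rfl⟩ | ⟨j, a', b', hab', rfl⟩
  · -- spoke / spoke
    rw [col_spoke, col_spoke] at hcolv
    have := w.2.isLt; have := w'.2.isLt
    have h1 : w.1.val = w'.1.val ∧ w.2.val = w'.2.val := by omega
    exact hnev (by rw [show w = w' from Prod.ext (Fin.ext h1.1) (Fin.ext h1.2)])
  · -- spoke / triangle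
    rw [col_spoke, col_tri] at hcolv
    simp only [Sym2.mem_iff] at hv1 hv2
    have hw1 : w.1 = j := by
      rcases hv1 with rfl | rfl
      · rcases hv2 with h | h <;> exact absurd h (by simp)
      · rcases hv2 with h | h <;>
          · rw [show w = _ from Sum.inr.inj h]
    exact key hn2 w.1.val w.2.val w.1.isLt w.2.isLt (by rw [hw1] at hcolv ⊢; exact hcolv)
  · -- triangle / spoke
    rw [col_tri, col_spoke] at hcolv
    simp only [Sym2.mem_iff] at hv1 hv2
    have hw1 : w'.1 = i := by
      rcases hv2 with rfl | rfl
      · rcases hv1 with h | h <;> exact absurd h (by simp)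
      · rcases hv1 with h | h <;>
          · rw [show w' = _ from Sum.inr.inj h]
    exact key hn2 w'.1.val w'.2.val w'.1.isLt w'.2.isLt
      (by rw [hw1] at hcolv ⊢; exact hcolv.symm)
  · -- triangle / triangle
    simp only [Sym2.mem_iff] at hv1 hv2
    have hij : i = j := by
      rcases hv1 with rfl | rfl <;> rcases hv2 with h | h <;>
        exact congrArg Prod.fst (Sum.inr.inj h)
    subst hij
    exact hnev (tri_eq i a b a' b' hab hab')
private lemma spoke_ne_tri (w : Fin n × Fin 2) (t : Fin n) (a b : Fin 2) :
    (s(Sum.inl 0, Sum.inr w) : Sym2 (Fin 1 ⊕ Fin n × Fin 2)) ≠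
      s(Sum.inr (t, a), Sum.inr (t, b)) := by
  intro h
  rw [Sym2.eq_iff] at h
  rcases h with ⟨h, -⟩ | ⟨h, -⟩ <;> exact Sum.inl_ne_inr h

private lemma col_dom (hn2 : 2 ≤ n) (hn : 0 < n) :
    ∀ i : Fin (2 * n),
      ∃ e : (graphJoin (⊤ : SimpleGraph (Fin 1)) (nK2 n)).edgeSet,
        ∀ f, col hn f = i →
          f = e ∨ EdgeAdj (graphJoin (⊤ : SimpleGraph (Fin 1)) (nK2 n)) e f := by
  intro i
  have hjv : (i.val / 2 + (n - 1)) % n < n := Nat.mod_lt _ hn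
  set j : Fin n := ⟨(i.val / 2 + (n - 1)) % n, hjv⟩ with hj
  refine ⟨⟨s(.inl 0, .inr (j, 0)), spoke_mem _⟩, ?_⟩
  rintro ⟨f, hf⟩ hcol
  have hcolv := congrArg Fin.val hcol
  rcases edge_cases f hf with ⟨w, rfl⟩ | ⟨t, a, b, hab, rfl⟩
  · by_cases hw : w = (j, 0)
    · left; subst hw; exact Subtype.ext rfl
    · right
      refine ⟨?_, Sum.inl 0, Sym2.mem_mk_left _ _, Sym2.mem_mk_left _ _⟩
      intro h
      have h2 := Subtype.ext_iff.mp h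
      rw [Sym2.eq_iff] at h2
      rcases h2 with ⟨-, h3⟩ | ⟨h3, -⟩
      · exact hw (Sum.inr.inj h3).symm
      · exact Sum.inl_ne_inr h3
  · -- triangle t, colored i; show j = t
    rw [col_tri] at hcolv
    have e1 : i.val / 2 = (t.val + 1) % n := by omega
    have e2 : j.val = t.val := by
      rw [hj]
      show (i.val / 2 + (n - 1)) % n = t.val
      rw [e1, Nat.mod_add_mod, show t.val + 1 + (n - 1) = t.val + n by omega,
        Nat.add_mod_right, Nat.mod_eq_of_lt t.isLt]
    have hjt : j = t := Fin.ext e2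
    right
    refine ⟨fun h => spoke_ne_tri _ _ _ _ (Subtype.ext_iff.mp h), ?_⟩
    have hab' : a.val ≠ b.val := fun h => hab (Fin.ext h)
    have := a.isLt; have := b.isLt
    have h0 : a.val = 0 ∨ b.val = 0 := by omega
    refine ⟨Sum.inr (t, 0), ?_, ?_⟩
    · rw [Sym2.mem_iff]; right; rw [hjt]
    · rw [Sym2.mem_iff]
      rcases h0 with h | h
      · left; rw [show (0 : Fin 2) = a from (Fin.ext h).symm]
      · right; rw [show (0 : Fin 2) = b from (Fin.ext h).symm]

private lemma col_lower (m : ℕ)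
    (c : (graphJoin (⊤ : SimpleGraph (Fin 1)) (nK2 n)).edgeSet → Fin m)
    (hc : IsDomEdgeColoring (graphJoin (⊤ : SimpleGraph (Fin 1)) (nK2 n)) c) :
    2 * n ≤ m := by
  have hinj : Function.Injective
      (fun w : Fin n × Fin 2 => c ⟨s(.inl 0, .inr w), spoke_mem w⟩) := by
    intro w w' h
    by_contra hww
    refine hc.1 ⟨_, spoke_mem w⟩ ⟨_, spoke_mem w'⟩
      ⟨?_, Sum.inl 0, Sym2.mem_mk_left _ _, Sym2.mem_mk_left _ _⟩ h
    intro heq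
    have h2 := Subtype.ext_iff.mp heq
    rw [Sym2.eq_iff] at h2
    rcases h2 with ⟨-, h3⟩ | ⟨h3, -⟩
    · exact hww (Sum.inr.inj h3)
    · exact Sum.inl_ne_inr h3
  have hcard := Fintype.card_le_of_injective _ hinj
  simpa [mul_comm] using hcard
end FriendshipAux

/-- For `n ≥ 2`, the friendship graph `F_n = K_1 + nK_2` has `χ'_dom(F_n) = 2n`. -/
theorem stmt_7 (n : ℕ) (hn : 2 ≤ n) :
    domEdgeChrom (graphJoin (⊤ : SimpleGraph (Fin 1)) (nK2 n)) = 2 * n := by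
  have hn0 : 0 < n := by omega
  have hmem : 2 * n ∈ {m | ∃ c : (graphJoin (⊤ : SimpleGraph (Fin 1)) (nK2 n)).edgeSet → Fin m,
      IsDomEdgeColoring (graphJoin (⊤ : SimpleGraph (Fin 1)) (nK2 n)) c} :=
    ⟨col hn0, col_proper hn hn0, col_dom hn hn0⟩
  refine le_antisymm (Nat.sInf_le hmem) (le_csInf ⟨2 * n, hmem⟩ ?_)
  rintro m ⟨c, hc⟩
  exact col_lower m c hc
end

section
/- For all integers a and b with a ≥ b ≥ 2, there exists a finite simple graph G with dominated edge chromatic number χ'_dom(G) = a and total edge domination number γ'_t(G) = b. -/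
open SimpleGraph

namespace S9

def relb (b u v : ℕ) : Prop :=
  (u = 0 ∧ (1 ≤ v ∧ v ≤ b ∨ 2*b < v)) ∨ (1 ≤ u ∧ u ≤ b ∧ v = u + b)

def Gr (a b : ℕ) : SimpleGraph (Fin (a+b+1)) :=
  SimpleGraph.fromRel (fun u v => relb b u.val v.val)

lemma adj_iff {a b : ℕ} (hb : 1 ≤ b) {u v : Fin (a+b+1)} :
    (Gr a b).Adj u v ↔ relb b u.val v.val ∨ relb b v.val u.val := by
  rw [Gr, SimpleGraph.fromRel_adj]
  unfold relb
  constructor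
  · rintro ⟨-, h⟩; exact h
  · intro h
    refine ⟨fun he => ?_, h⟩
    apply_fun Fin.val at he
    omega

def cA (b v : ℕ) : ℕ := if v ≤ b then v - 1 else v - b - 1
def cB (b m : ℕ) : ℕ := if m = b then 0 else m
def colFun (b u v : ℕ) : ℕ := if u = 0 then cA b v else if v = 0 then cA b u else cB b (min u v)

lemma colFun_symm (b u v : ℕ) : colFun b u v = colFun b v u := by
  unfold colFun
  split_ifs <;> first | rfl | omega | rw [Nat.min_comm] | (subst_vars; rfl)

end S9
namespace S9

def colS (a b : ℕ) : Sym2 (Fin (a+b+1)) → ℕ :=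
  Sym2.lift ⟨fun u v => colFun b u.val v.val, fun u v => colFun_symm b u.val v.val⟩

def coloring (a b : ℕ) (ha : 0 < a) : (Gr a b).edgeSet → Fin a :=
  fun e => ⟨colS a b e.val % a, Nat.mod_lt _ ha⟩

lemma colFun_lt {a b : ℕ} (hb : 2 ≤ b) (hab : b ≤ a) {x y : ℕ}
    (hx : x < a+b+1) (hy : y < a+b+1) (h : relb b x y ∨ relb b y x) :
    colFun b x y < a := by
  unfold relb at h
  unfold colFun cA cB
  simp only [Nat.min_def]
  split_ifs <;> omega

lemma coloring_val {a b : ℕ} (hb : 2 ≤ b) (hab : b ≤ a) (ha : 0 < a)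
    {u v : Fin (a+b+1)} (e : (Gr a b).edgeSet) (huv : (e : Sym2 (Fin (a+b+1))) = s(u,v)) :
    (coloring a b ha e).val = colFun b u.val v.val := by
  have hadj : (Gr a b).Adj u v := (SimpleGraph.mem_edgeSet _).mp (huv ▸ e.2)
  have h2 := (adj_iff (by omega)).mp hadj
  have : colS a b e.val = colFun b u.val v.val := by
    rw [huv]; exact Sym2.lift_mk _ u v
  simp only [coloring, this]
  exact Nat.mod_eq_of_lt (colFun_lt hb hab u.isLt v.isLt h2)

/-- canonical case analysis for edges -/
lemma edge_cases {a b : ℕ} (hb : 1 ≤ b) (e : (Gr a b).edgeSet) :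
    (∃ w : Fin (a+b+1), (e : Sym2 (Fin (a+b+1))) = s(⟨0, by omega⟩, w) ∧
       (1 ≤ w.val ∧ w.val ≤ b ∨ 2*b < w.val)) ∨
    (∃ m w : Fin (a+b+1), (e : Sym2 (Fin (a+b+1))) = s(m, w) ∧
       1 ≤ m.val ∧ m.val ≤ b ∧ w.val = m.val + b) := by
  obtain ⟨e, he⟩ := e
  revert he
  induction e using Sym2.ind with
  | _ u v =>
    intro he
    have h2 := (adj_iff hb).mp ((SimpleGraph.mem_edgeSet _).mp he)
    simp only []
    unfold relb at h2
    rcases h2 with h | h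
    · rcases h with ⟨h1, h2⟩ | ⟨h1, h2, h3⟩
      · left; exact ⟨v, by rw [show u = ⟨0, by omega⟩ from Fin.ext h1], h2⟩
      · right; exact ⟨u, v, rfl, h1, h2, h3⟩
    · rcases h with ⟨h1, h2⟩ | ⟨h1, h2, h3⟩
      · left; exact ⟨u, by rw [show v = ⟨0, by omega⟩ from Fin.ext h1, Sym2.eq_swap], h2⟩
      · right; exact ⟨v, u, Sym2.eq_swap, h1, h2, h3⟩

lemma sym2_ne {n : ℕ} {u v p q : Fin n}
    (h : ¬((u.val = p.val ∧ v.val = q.val) ∨ (u.val = q.val ∧ v.val = p.val))) :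
    s(u,v) ≠ s(p,q) := by
  intro he
  rw [Sym2.eq_iff] at he
  apply h
  rcases he with ⟨h1, h2⟩ | ⟨h1, h2⟩
  · exact Or.inl ⟨congrArg Fin.val h1, congrArg Fin.val h2⟩
  · exact Or.inr ⟨congrArg Fin.val h1, congrArg Fin.val h2⟩

lemma edgeAdj_of {a b : ℕ} {e f : (Gr a b).edgeSet}
    (hne : (e : Sym2 (Fin (a+b+1))) ≠ (f : Sym2 (Fin (a+b+1))))
    (w : Fin (a+b+1)) (h1 : w ∈ (e : Sym2 (Fin (a+b+1)))) (h2 : w ∈ (f : Sym2 (Fin (a+b+1)))) :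
    EdgeAdj (Gr a b) e f :=
  ⟨fun h => hne (congrArg _ h), w, h1, h2⟩

end S9
namespace S9

lemma edge_rep {a b : ℕ} (hb : 1 ≤ b) (e : (Gr a b).edgeSet) :
    ∃ u v : Fin (a+b+1), (e : Sym2 (Fin (a+b+1))) = s(u,v) ∧ relb b u.val v.val := by
  obtain ⟨e, he⟩ := e
  revert he
  induction e using Sym2.ind with
  | _ u v =>
    intro he
    have h2 := (adj_iff hb).mp ((SimpleGraph.mem_edgeSet _).mp he)
    rcases h2 with h | h
    · exact ⟨u, v, rfl, h⟩
    · exact ⟨v, u, Sym2.eq_swap, h⟩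

lemma proper {a b : ℕ} (hb : 2 ≤ b) (hab : b ≤ a) (ha : 0 < a) :
    ∀ e f, EdgeAdj (Gr a b) e f → coloring a b ha e ≠ coloring a b ha f := by
  rintro e f ⟨hne, w, hw1, hw2⟩ hc
  obtain ⟨u, v, hev, hP⟩ := edge_rep (by omega) e
  obtain ⟨p, q, hfv, hQ⟩ := edge_rep (by omega) f
  have hval : colFun b u.val v.val = colFun b p.val q.val := by
    rw [← coloring_val hb hab ha e hev, ← coloring_val hb hab ha f hfv, hc]
  have hnev : ¬((u.val = p.val ∧ v.val = q.val) ∨ (u.val = q.val ∧ v.val = p.val)) := by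
    intro h
    apply hne
    apply Subtype.ext
    rw [hev, hfv, Sym2.eq_iff]
    rcases h with ⟨h1, h2⟩ | ⟨h1, h2⟩
    · exact Or.inl ⟨Fin.ext h1, Fin.ext h2⟩
    · exact Or.inr ⟨Fin.ext h1, Fin.ext h2⟩
  rw [hev, Sym2.mem_iff] at hw1
  rw [hfv, Sym2.mem_iff] at hw2
  have hw1' : w.val = u.val ∨ w.val = v.val := by
    rcases hw1 with h | h <;> [left; right] <;> exact congrArg Fin.val h
  have hw2' : w.val = p.val ∨ w.val = q.val := by
    rcases hw2 with h | h <;> [left; right] <;> exact congrArg Fin.val h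
  unfold relb at hP hQ
  unfold colFun cA cB at hval
  simp only [Nat.min_def] at hval
  split_ifs at hval <;> omega

end S9

namespace S9

lemma dominated {a b : ℕ} (hb : 2 ≤ b) (hab : b ≤ a) (ha : 0 < a) :
    ∀ i : Fin a, ∃ e : (Gr a b).edgeSet,
      ∀ f, coloring a b ha f = i → f = e ∨ EdgeAdj (Gr a b) e f := by
  intro i
  by_cases hib : i.val < b
  · obtain ⟨m, hmP⟩ : ∃ m, (i.val = 0 ∧ m = b) ∨ (1 ≤ i.val ∧ m = i.val) := by
      by_cases h : i.val = 0
      exacts [⟨b, Or.inl ⟨h, rfl⟩⟩, ⟨i.val, Or.inr ⟨by omega, rfl⟩⟩]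
    refine ⟨⟨s(⟨0, by omega⟩, ⟨m, by omega⟩), ?_⟩, ?_⟩
    · rw [SimpleGraph.mem_edgeSet, adj_iff (by omega : 1 ≤ b)]
      exact Or.inl (Or.inl ⟨rfl, Or.inl ⟨by simp only [Fin.val_mk]; omega, by simp only [Fin.val_mk]; omega⟩⟩)
    · intro f hfc
      obtain ⟨p, q, hfv, hQ⟩ := edge_rep (by omega) f
      have hval : colFun b p.val q.val = i.val := by
        rw [← coloring_val hb hab ha f hfv, hfc]
      unfold relb at hQ
      rcases hQ with ⟨h1, h2⟩ | ⟨h1, h2, h3⟩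
      · have hq : q.val = i.val + 1 := by
          unfold colFun cA cB at hval
          split_ifs at hval <;> omega
        right
        refine edgeAdj_of ?_ ⟨0, by omega⟩ ?_ ?_
        · rw [hfv]
          apply sym2_ne
          simp only [Fin.val_mk]
          omega
        · exact Sym2.mem_mk_left _ _
        · rw [hfv, Sym2.mem_iff]
          exact Or.inl (Fin.ext h1.symm)
      · have hp : p.val = m := by
          unfold colFun cA cB at hval
          simp only [Nat.min_def] at hval
          split_ifs at hval <;> omega
        right
        refine edgeAdj_of ?_ ⟨m, by omega⟩ ?_ ?_
        · rw [hfv]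
          apply sym2_ne
          simp only [Fin.val_mk]
          omega
        · exact Sym2.mem_mk_right _ _
        · rw [hfv, Sym2.mem_iff]
          exact Or.inl (Fin.ext hp.symm)
  · refine ⟨⟨s(⟨0, by omega⟩, ⟨i.val + b + 1, by omega⟩), ?_⟩, ?_⟩
    · rw [SimpleGraph.mem_edgeSet, adj_iff (by omega : 1 ≤ b)]
      exact Or.inl (Or.inl ⟨rfl, Or.inr (by simp only [Fin.val_mk]; omega)⟩)
    · intro f hfc
      obtain ⟨p, q, hfv, hQ⟩ := edge_rep (by omega) f
      have hval : colFun b p.val q.val = i.val := by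
        rw [← coloring_val hb hab ha f hfv, hfc]
      unfold relb at hQ
      have hpq : p.val = 0 ∧ q.val = i.val + b + 1 := by
        unfold colFun cA cB at hval
        simp only [Nat.min_def] at hval
        split_ifs at hval <;> omega
      left
      apply Subtype.ext
      rw [hfv, Sym2.eq_iff]
      exact Or.inl ⟨Fin.ext (by simp only [Fin.val_mk]; omega),
                    Fin.ext (by simp only [Fin.val_mk]; omega)⟩

end S9

namespace S9

lemma chrom_lb {a b : ℕ} (hb : 2 ≤ b) (hab : b ≤ a) :
    ∀ n : ℕ, (∃ c : (Gr a b).edgeSet → Fin n, IsDomEdgeColoring (Gr a b) c) → a ≤ n := by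
  rintro n ⟨c, hc1, -⟩
  have hvtx : ∀ i : Fin a, ∃ w : Fin (a+b+1),
      (1 ≤ w.val ∧ w.val ≤ b ∨ 2*b < w.val) ∧
      (w.val = if i.val < b then i.val + 1 else i.val + b + 1) := by
    intro i
    by_cases h : i.val < b
    · exact ⟨⟨i.val + 1, by omega⟩, by simp only [Fin.val_mk]; omega, by simp [Fin.val_mk, h]⟩
    · exact ⟨⟨i.val + b + 1, by omega⟩, by simp only [Fin.val_mk]; omega, by simp [Fin.val_mk, h]⟩
  choose vtx hvtx1 hvtx2 using hvtx
  have hedge : ∀ i : Fin a, s((⟨0, by omega⟩ : Fin (a+b+1)), vtx i) ∈ (Gr a b).edgeSet := by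
    intro i
    rw [SimpleGraph.mem_edgeSet, adj_iff (by omega : 1 ≤ b)]
    exact Or.inl (Or.inl ⟨rfl, hvtx1 i⟩)
  set φ : Fin a → (Gr a b).edgeSet := fun i => ⟨_, hedge i⟩ with hφ
  have hinj : Function.Injective (fun i => c (φ i)) := by
    intro i j hij
    by_contra hne
    refine hc1 (φ i) (φ j) ⟨?_, ⟨0, by omega⟩, Sym2.mem_mk_left _ _, Sym2.mem_mk_left _ _⟩ hij
    intro h
    apply hne
    have h2 : s((⟨0, by omega⟩ : Fin (a+b+1)), vtx i) = s((⟨0, by omega⟩ : Fin (a+b+1)), vtx j) :=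
      congrArg Subtype.val h
    rw [Sym2.eq_iff] at h2
    have h3 : (vtx i).val = (vtx j).val := by
      have e1 := hvtx1 i; have e2 := hvtx1 j
      rcases h2 with ⟨-, h2⟩ | ⟨h2, h2'⟩
      · exact congrArg Fin.val h2
      · have := congrArg Fin.val h2; have := congrArg Fin.val h2'
        simp only [Fin.val_mk] at *; omega
    rw [hvtx2 i, hvtx2 j] at h3
    apply Fin.ext
    split_ifs at h3 <;> omega
  calc a = Fintype.card (Fin a) := (Fintype.card_fin a).symm
    _ ≤ Fintype.card (Fin n) := Fintype.card_le_of_injective _ hinj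
    _ = n := Fintype.card_fin n

def Aedge (a b : ℕ) (hb : 1 ≤ b) (m : Fin b) : (Gr a b).edgeSet :=
  ⟨s(⟨0, by omega⟩, ⟨m.val + 1, by omega⟩), by
    rw [SimpleGraph.mem_edgeSet, adj_iff hb]
    exact Or.inl (Or.inl ⟨rfl, Or.inl ⟨by simp only [Fin.val_mk]; omega,
      by simp only [Fin.val_mk]; omega⟩⟩)⟩

lemma Aedge_inj (a b : ℕ) (hb : 1 ≤ b) : Function.Injective (Aedge a b hb) := by
  intro i j h
  have h2 := congrArg Subtype.val h
  simp only [Aedge] at h2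
  rw [Sym2.eq_iff] at h2
  apply Fin.ext
  rcases h2 with ⟨-, h2⟩ | ⟨h2, -⟩ <;>
    · have := congrArg Fin.val h2; simp only [Fin.val_mk] at this; omega

end S9

namespace S9

lemma totdom {a b : ℕ} (hb : 2 ≤ b) (hab : b ≤ a) (hb1 : 1 ≤ b) :
    IsTotalEdgeDom (Gr a b) (Set.range (Aedge a b hb1)) := by
  intro e
  obtain ⟨u, v, hev, hP⟩ := edge_rep hb1 e
  unfold relb at hP
  rcases hP with ⟨h1, h2⟩ | ⟨h1, h2, h3⟩
  · obtain ⟨j, hj⟩ : ∃ j : Fin b, j.val + 1 ≠ v.val := by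
      by_cases h : v.val = 1
      · exact ⟨⟨1, by omega⟩, by simp only [Fin.val_mk]; omega⟩
      · exact ⟨⟨0, by omega⟩, by simp only [Fin.val_mk]; omega⟩
    refine ⟨Aedge a b hb1 j, ⟨j, rfl⟩, edgeAdj_of ?_ u ?_ ?_⟩
    · rw [hev]
      show s(u, v) ≠ s(⟨0, by omega⟩, ⟨j.val + 1, by omega⟩)
      apply sym2_ne
      simp only [Fin.val_mk]
      omega
    · rw [hev]; exact Sym2.mem_mk_left _ _
    · show u ∈ s((⟨0, by omega⟩ : Fin (a+b+1)), (⟨j.val + 1, by omega⟩ : Fin (a+b+1)))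
      rw [Sym2.mem_iff]
      exact Or.inl (Fin.ext (by simp only [Fin.val_mk]; omega))
  · refine ⟨Aedge a b hb1 ⟨u.val - 1, by omega⟩, ⟨_, rfl⟩, edgeAdj_of ?_ u ?_ ?_⟩
    · rw [hev]
      show s(u, v) ≠ s(⟨0, by omega⟩, ⟨(u.val - 1) + 1, by omega⟩)
      apply sym2_ne
      simp only [Fin.val_mk]
      omega
    · rw [hev]; exact Sym2.mem_mk_left _ _
    · show u ∈ s((⟨0, by omega⟩ : Fin (a+b+1)), (⟨(u.val - 1) + 1, by omega⟩ : Fin (a+b+1)))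
      rw [Sym2.mem_iff]
      exact Or.inr (Fin.ext (by simp only [Fin.val_mk]; omega))

lemma dom_lb {a b : ℕ} (hb : 2 ≤ b) (hab : b ≤ a) (hb1 : 1 ≤ b) :
    ∀ D : Set (Gr a b).edgeSet, D.Finite → IsTotalEdgeDom (Gr a b) D → b ≤ D.ncard := by
  intro D hfin htot
  have key : ∀ m : Fin b, Aedge a b hb1 m ∈ D := by
    intro m
    have hmlt := m.isLt
    have hBedge : s((⟨m.val+1, by omega⟩ : Fin (a+b+1)), (⟨m.val+1+b, by omega⟩ : Fin (a+b+1)))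
        ∈ (Gr a b).edgeSet := by
      rw [SimpleGraph.mem_edgeSet, adj_iff hb1]
      exact Or.inl (Or.inr ⟨by simp only [Fin.val_mk]; try omega, by simp only [Fin.val_mk]; try omega,
        by simp only [Fin.val_mk]; try omega⟩)
    obtain ⟨f, hfD, hne, w, hw1, hw2⟩ := htot ⟨_, hBedge⟩
    obtain ⟨p, q, hfv, hQ⟩ := edge_rep hb1 f
    unfold relb at hQ
    have hw1' : w.val = m.val+1 ∨ w.val = m.val+1+b := by
      have : w ∈ s((⟨m.val+1, by omega⟩ : Fin (a+b+1)), (⟨m.val+1+b, by omega⟩ : Fin (a+b+1))) := hw1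
      rw [Sym2.mem_iff] at this
      rcases this with h | h <;> [left; right] <;>
        · have := congrArg Fin.val h; simp only [Fin.val_mk] at this; omega
    have hw2' : w.val = p.val ∨ w.val = q.val := by
      rw [hfv, Sym2.mem_iff] at hw2
      rcases hw2 with h | h <;> [left; right] <;> exact congrArg Fin.val h
    have hnev : ¬((p.val = m.val+1 ∧ q.val = m.val+1+b) ∨
        (p.val = m.val+1+b ∧ q.val = m.val+1)) := by
      intro hc
      apply hne
      apply Subtype.ext
      show s((⟨m.val+1, by omega⟩ : Fin (a+b+1)), (⟨m.val+1+b, by omega⟩ : Fin (a+b+1))) = _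
      rw [hfv, Sym2.eq_iff]
      rcases hc with ⟨hc1, hc2⟩ | ⟨hc1, hc2⟩
      · exact Or.inl ⟨Fin.ext (by simp only [Fin.val_mk]; omega),
          Fin.ext (by simp only [Fin.val_mk]; omega)⟩
      · exact Or.inr ⟨Fin.ext (by simp only [Fin.val_mk]; omega),
          Fin.ext (by simp only [Fin.val_mk]; omega)⟩
    rcases hQ with ⟨h1, h2⟩ | ⟨h1, h2, h3⟩
    · have : f = Aedge a b hb1 m := by
        apply Subtype.ext
        rw [hfv]
        show s(p, q) = s(⟨0, by omega⟩, ⟨m.val + 1, by omega⟩)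
        rw [Sym2.eq_iff]
        exact Or.inl ⟨Fin.ext (by simp only [Fin.val_mk]; omega),
          Fin.ext (by simp only [Fin.val_mk]; omega)⟩
      exact this ▸ hfD
    · exact absurd (by left; constructor <;> omega) hnev
  have hfin' : Finite D := Set.Finite.to_subtype hfin
  have hinj : Function.Injective (fun m : Fin b => (⟨Aedge a b hb1 m, key m⟩ : D)) := by
    intro i j h
    exact Aedge_inj a b hb1 (congrArg Subtype.val h)
  calc b = Nat.card (Fin b) := by simp
    _ ≤ Nat.card D := Nat.card_le_card_of_injective _ hinj
    _ = D.ncard := Nat.card_coe_set_eq D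

end S9

/-- For all integers `a ≥ b ≥ 2` there is a finite graph `G` with `χ'_dom(G) = a` and
`γ'_t(G) = b`. -/
theorem stmt_9 (a b : ℕ) (hb : 2 ≤ b) (hab : b ≤ a) :
    ∃ (n : ℕ) (G : SimpleGraph (Fin n)),
      domEdgeChrom G = a ∧ totalEdgeDomNumber G = b := by
  have ha : 0 < a := by omega
  have hb1 : 1 ≤ b := by omega
  refine ⟨a+b+1, S9.Gr a b, ?_, ?_⟩
  · have hmem : a ∈ {n | ∃ c : (S9.Gr a b).edgeSet → Fin n, IsDomEdgeColoring (S9.Gr a b) c} :=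
      ⟨S9.coloring a b ha, S9.proper hb hab ha, S9.dominated hb hab ha⟩
    exact le_antisymm (Nat.sInf_le hmem)
      (le_csInf ⟨a, hmem⟩ fun n hn => S9.chrom_lb hb hab n hn)
  · have hmem : b ∈ {n | ∃ D : Set (S9.Gr a b).edgeSet,
        D.Finite ∧ D.ncard = n ∧ IsTotalEdgeDom (S9.Gr a b) D} := by
      refine ⟨Set.range (S9.Aedge a b hb1), Set.toFinite _, ?_, S9.totdom hb hab hb1⟩
      rw [← Set.image_univ, Set.ncard_image_of_injective _ (S9.Aedge_inj a b hb1),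
        Set.ncard_univ]
      simp
    refine le_antisymm (Nat.sInf_le hmem) (le_csInf ⟨b, hmem⟩ ?_)
    rintro n ⟨D, hf, hc, ht⟩
    exact hc ▸ S9.dom_lb hb hab hb1 D hf ht
end

section
/- Let G be a connected finite simple graph and let v be a vertex of G that is not a cut vertex (i.e., G - v is connected) and such that G - v has at least one edge. Then χ'_dom(G) - deg(v) ≤ χ'_dom(G - v) ≤ χ'_dom(G) + deg(v). -/
open SimpleGraph

section Aux

variable {V : Type*} {G : SimpleGraph V} {v : V}

lemma mem_up {e : Sym2 {w : V | w ≠ v}} (h : e ∈ (G.induce {w | w ≠ v}).edgeSet) :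
    Sym2.map Subtype.val e ∈ G.edgeSet := by
  induction e using Sym2.ind with
  | _ a b => simpa using h

/-- the edge of `G` corresponding to an edge of `G - v` -/
def edgeUp (e : (G.induce {w | w ≠ v}).edgeSet) : G.edgeSet :=
  ⟨Sym2.map Subtype.val e.1, mem_up e.2⟩

lemma edgeUp_inj : Function.Injective (edgeUp (G := G) (v := v)) := by
  intro e f h
  exact Subtype.ext (Sym2.map.injective Subtype.val_injective (congrArg Subtype.val h))

lemma not_mem_edgeUp (e : (G.induce {w | w ≠ v}).edgeSet) : v ∉ (edgeUp e : Sym2 V) := by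
  intro h
  obtain ⟨a, _, ha⟩ := Sym2.mem_map.mp h
  exact a.2 ha

lemma exists_up {e : Sym2 V} (h : e ∈ G.edgeSet) (hv : v ∉ e) :
    ∃ f : (G.induce {w | w ≠ v}).edgeSet, (edgeUp f : Sym2 V) = e := by
  induction e using Sym2.ind with
  | _ a b =>
    have ha : a ≠ v := by rintro rfl; exact hv (by simp)
    have hb : b ≠ v := by rintro rfl; exact hv (by simp)
    refine ⟨⟨s((⟨a, ha⟩ : {w : V | w ≠ v}), ⟨b, hb⟩), by simpa using h⟩, by simp [edgeUp]⟩

lemma edgeAdj_up_iff {e f : (G.induce {w | w ≠ v}).edgeSet} :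
    EdgeAdj G (edgeUp e) (edgeUp f) ↔ EdgeAdj (G.induce {w | w ≠ v}) e f := by
  constructor
  · rintro ⟨hne, x, hx1, hx2⟩
    refine ⟨fun h => hne (by rw [h]), ?_⟩
    obtain ⟨a, ha, rfl⟩ := Sym2.mem_map.mp hx1
    obtain ⟨b, hb, hba⟩ := Sym2.mem_map.mp hx2
    have : b = a := Subtype.ext hba
    subst this
    exact ⟨b, ha, hb⟩
  · rintro ⟨hne, x, hx1, hx2⟩
    exact ⟨fun h => hne (edgeUp_inj h),
      ⟨(x : V), Sym2.mem_map.mpr ⟨x, hx1, rfl⟩, Sym2.mem_map.mpr ⟨x, hx2, rfl⟩⟩⟩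

lemma domEdgeChrom_set_nonempty {W : Type*} [Finite W] (K : SimpleGraph W) :
    {n | ∃ c : K.edgeSet → Fin n, IsDomEdgeColoring K c}.Nonempty := by
  classical
  have : Finite K.edgeSet := Subtype.finite
  have F : Fintype K.edgeSet := Fintype.ofFinite _
  let e := @Fintype.equivFin K.edgeSet F
  refine ⟨Fintype.card K.edgeSet, fun x => e x, ?_, ?_⟩
  · intro a b hadj h
    exact hadj.1 (e.injective h)
  · intro i
    exact ⟨e.symm i, fun f hf => Or.inl (e.eq_symm_apply.mpr hf)⟩

lemma restrict_coloring {n : ℕ} (c : G.edgeSet → Fin n) (hc : IsDomEdgeColoring G c)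
    (he : (G.induce {w | w ≠ v}).edgeSet.Nonempty) :
    ∃ c' : (G.induce {w | w ≠ v}).edgeSet → Fin n,
      IsDomEdgeColoring (G.induce {w | w ≠ v}) c' := by
  classical
  refine ⟨fun e => c (edgeUp e), ?_, ?_⟩
  · intro e f hadj
    exact hc.1 _ _ (edgeAdj_up_iff.mpr hadj)
  · intro i
    obtain ⟨e, hdome⟩ := hc.2 i
    by_cases hv : v ∈ (e : Sym2 V)
    · by_cases hcl : ∃ f0 : (G.induce {w | w ≠ v}).edgeSet, c (edgeUp f0) = i
      · obtain ⟨f0, hf0⟩ := hcl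
        refine ⟨f0, fun f hf => ?_⟩
        by_cases hff : f = f0
        · exact Or.inl hff
        · right
          obtain ⟨w, hwspec⟩ := Sym2.mem_iff_exists.mp hv
          have key : ∀ g : (G.induce {w | w ≠ v}).edgeSet,
              c (edgeUp g) = i → w ∈ (edgeUp g : Sym2 V) := by
            intro g hg
            rcases hdome (edgeUp g) hg with h1 | h1
            · exact absurd (h1.symm ▸ hv) (not_mem_edgeUp g)
            · obtain ⟨hne, x, hx1, hx2⟩ := h1
              have hxv : x ≠ v := fun h => (not_mem_edgeUp g) (h ▸ hx2)
              rw [hwspec, Sym2.mem_iff] at hx1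
              rcases hx1 with rfl | rfl
              · exact absurd rfl hxv
              · exact hx2
          have hwf := key f hf
          have hwf0 := key f0 hf0
          have hadjG : EdgeAdj G (edgeUp f0) (edgeUp f) :=
            ⟨fun h => hff (edgeUp_inj h).symm, ⟨w, hwf0, hwf⟩⟩
          exact edgeAdj_up_iff.mp hadjG
      · obtain ⟨f0, hf0⟩ := he
        exact ⟨⟨f0, hf0⟩, fun f hf => absurd ⟨f, hf⟩ hcl⟩
    · obtain ⟨ehat, hehat⟩ := exists_up e.2 hv
      have he2 : edgeUp ehat = e := Subtype.ext hehat
      refine ⟨ehat, fun f hf => ?_⟩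
      rcases hdome (edgeUp f) hf with h1 | h1
      · exact Or.inl (edgeUp_inj (h1.trans he2.symm))
      · right
        rw [← he2] at h1
        exact edgeAdj_up_iff.mp h1

lemma extend_coloring [Fintype V] [DecidableRel G.Adj] {n : ℕ}
    (c : (G.induce {w | w ≠ v}).edgeSet → Fin n)
    (hc : IsDomEdgeColoring (G.induce {w | w ≠ v}) c)
    (he : (G.induce {w | w ≠ v}).edgeSet.Nonempty) :
    ∃ C : G.edgeSet → Fin (n + G.degree v), IsDomEdgeColoring G C := by
  classical
  let eqv : G.neighborSet v ≃ Fin (G.degree v) :=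
    Fintype.equivFinOfCardEq (G.card_neighborSet_eq_degree v)
  have hother : ∀ (e : G.edgeSet) (h : v ∈ (e : Sym2 V)),
      Sym2.Mem.other h ∈ G.neighborSet v := by
    intro e h
    have h2 := e.2
    rw [← Sym2.other_spec h] at h2
    exact h2
  let J : G.edgeSet → Fin (n + G.degree v) := fun e =>
    if h : v ∈ (e : Sym2 V) then Fin.natAdd n (eqv ⟨Sym2.Mem.other h, hother e h⟩)
    else Fin.castAdd (G.degree v) (c (exists_up e.2 h).choose)
  have hρ : ∀ (e : G.edgeSet) (h : v ∉ (e : Sym2 V)),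
      edgeUp (exists_up e.2 h).choose = e := fun e h => Subtype.ext (exists_up e.2 h).choose_spec
  refine ⟨J, ?_, ?_⟩
  · rintro e f ⟨hne, x, hx1, hx2⟩ hJ
    by_cases hv1 : v ∈ (e : Sym2 V) <;> by_cases hv2 : v ∈ (f : Sym2 V)
    · simp only [J, dif_pos hv1, dif_pos hv2] at hJ
      have hval := congrArg Fin.val hJ
      simp only [Fin.coe_natAdd] at hval
      have : eqv ⟨Sym2.Mem.other hv1, hother e hv1⟩ = eqv ⟨Sym2.Mem.other hv2, hother f hv2⟩ :=
        Fin.ext (by omega)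
      have hoth : Sym2.Mem.other hv1 = Sym2.Mem.other hv2 :=
        Subtype.mk_eq_mk.mp (eqv.injective this)
      apply hne
      apply Subtype.ext
      rw [← Sym2.other_spec hv1, ← Sym2.other_spec hv2, hoth]
    · simp only [J, dif_pos hv1, dif_neg hv2] at hJ
      have hval := congrArg Fin.val hJ
      simp only [Fin.coe_natAdd, Fin.coe_castAdd] at hval
      have := (c (exists_up f.2 hv2).choose).isLt
      omega
    · simp only [J, dif_neg hv1, dif_pos hv2] at hJ
      have hval := congrArg Fin.val hJ
      simp only [Fin.coe_natAdd, Fin.coe_castAdd] at hval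
      have := (c (exists_up e.2 hv1).choose).isLt
      omega
    · simp only [J, dif_neg hv1, dif_neg hv2] at hJ
      have hval := congrArg Fin.val hJ
      simp only [Fin.coe_castAdd] at hval
      have hcc : c (exists_up e.2 hv1).choose = c (exists_up f.2 hv2).choose := Fin.ext hval
      have hadjG : EdgeAdj G (edgeUp (exists_up e.2 hv1).choose)
          (edgeUp (exists_up f.2 hv2).choose) := by
        rw [hρ e hv1, hρ f hv2]
        exact ⟨hne, x, hx1, hx2⟩
      exact hc.1 _ _ (edgeAdj_up_iff.mp hadjG) hcc
  · intro i
    by_cases hi : (i : ℕ) < n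
    · obtain ⟨ehat, hdom⟩ := hc.2 ⟨i, hi⟩
      refine ⟨edgeUp ehat, fun f hf => ?_⟩
      have hvf : v ∉ (f : Sym2 V) := by
        intro hvf
        have hval := congrArg Fin.val hf
        simp only [J, dif_pos hvf, Fin.coe_natAdd] at hval
        omega
      have hcf : c (exists_up f.2 hvf).choose = ⟨i, hi⟩ := by
        have hval := congrArg Fin.val hf
        simp only [J, dif_neg hvf, Fin.coe_castAdd] at hval
        exact Fin.ext hval
      rcases hdom _ hcf with h1 | h1
      · exact Or.inl (by rw [← hρ f hvf, h1])
      · right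
        have := edgeAdj_up_iff.mpr h1
        rwa [hρ f hvf] at this
    · by_cases hcl : ∃ F : G.edgeSet, J F = i
      · obtain ⟨F0, hF0⟩ := hcl
        have hmemv : ∀ F : G.edgeSet, J F = i → v ∈ (F : Sym2 V) := by
          intro F hF
          by_contra hvF
          have hval := congrArg Fin.val hF
          simp only [J, dif_neg hvF, Fin.coe_castAdd] at hval
          have := (c (exists_up F.2 hvF).choose).isLt
          omega
        refine ⟨F0, fun f hf => ?_⟩
        by_cases hff : f = F0
        · exact Or.inl hff
        · exact Or.inr ⟨fun h => hff h.symm, ⟨v, hmemv F0 hF0, hmemv f hf⟩⟩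
      · exact ⟨edgeUp ⟨he.choose, he.choose_spec⟩, fun f hf => absurd ⟨f, hf⟩ hcl⟩

end Aux

/-- If `v` is not a cut vertex of the connected graph `G` and `G - v` has an edge, then
`χ'_dom(G) - deg(v) ≤ χ'_dom(G - v) ≤ χ'_dom(G) + deg(v)`. -/
theorem stmt_12 {V : Type*} [Fintype V] (G : SimpleGraph V) [DecidableRel G.Adj] (v : V)
    (hG : G.Connected) (hcut : (G.induce {w | w ≠ v}).Connected)
    (he : (G.induce {w | w ≠ v}).edgeSet.Nonempty) :
    domEdgeChrom G - G.degree v ≤ domEdgeChrom (G.induce {w | w ≠ v}) ∧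
    domEdgeChrom (G.induce {w | w ≠ v}) ≤ domEdgeChrom G + G.degree v := by
  classical
  obtain ⟨cG, hcG⟩ := Nat.sInf_mem (domEdgeChrom_set_nonempty G)
  obtain ⟨cH, hcH⟩ := Nat.sInf_mem (domEdgeChrom_set_nonempty (G.induce {w | w ≠ v}))
  have h1 : domEdgeChrom (G.induce {w | w ≠ v}) ≤ domEdgeChrom G :=
    Nat.sInf_le (restrict_coloring cG hcG he)
  have h2 : domEdgeChrom G ≤ domEdgeChrom (G.induce {w | w ≠ v}) + G.degree v :=
    Nat.sInf_le (extend_coloring cH hcH he)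
  omega
end

section
/- If G is a finite simple graph with m edges and k ≥ 3, then the dominated edge chromatic number of the k-subdivision of G satisfies χ'_dom(G^{1/k}) ≥ m. -/
open SimpleGraph

/-- The `k`-subdivision `G^{1/k}` of `G`: every edge of `G` is replaced by a path of length
`k`. Internal vertices of the superedge replacing an edge `e` are pairs `(e, l)` with
`l < k - 1`, indexed by their distance (minus one) from the smaller endpoint of `e`. -/
def subdivision {V : Type*} [LinearOrder V] (G : SimpleGraph V) (k : ℕ) :
    SimpleGraph (V ⊕ G.edgeSet × Fin (k - 1)) :=
  SimpleGraph.fromRel (fun a b =>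
    match a, b with
    | .inl u, .inl w => k = 1 ∧ G.Adj u w
    | .inl u, .inr (e, l) =>
        ((l : ℕ) = 0 ∧ u = Sym2.inf (e : Sym2 V)) ∨
        ((l : ℕ) = k - 2 ∧ u = Sym2.sup (e : Sym2 V))
    | .inr _, .inl _ => False
    | .inr (e, l), .inr (e', l') => e = e' ∧ (l : ℕ) + 1 = (l' : ℕ))


lemma subdiv_adj_inr {V : Type*} [LinearOrder V] {G : SimpleGraph V} {k : ℕ}
    {p q : G.edgeSet × Fin (k - 1)}
    (h : (subdivision G k).Adj (Sum.inr p) (Sum.inr q)) : p.1 = q.1 := by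
  obtain ⟨e, l⟩ := p; obtain ⟨e', l'⟩ := q
  rw [subdivision, SimpleGraph.fromRel_adj] at h
  obtain ⟨-, h | h⟩ := h
  · exact h.1
  · exact h.1.symm

lemma subdiv_key {V : Type*} [LinearOrder V] {G : SimpleGraph V} {k : ℕ}
    (g : Sym2 (V ⊕ G.edgeSet × Fin (k - 1))) (hg : g ∈ (subdivision G k).edgeSet)
    {e e' : G.edgeSet} {l l' : Fin (k - 1)}
    (h1 : Sum.inr (e, l) ∈ g) (h2 : Sum.inr (e', l') ∈ g) : e = e' := by
  induction g using Sym2.ind with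
  | _ a b =>
    rw [SimpleGraph.mem_edgeSet] at hg
    rw [Sym2.mem_iff] at h1 h2
    rcases h1 with h1 | h1 <;> rcases h2 with h2 | h2
    · rw [← h1] at h2; exact congrArg Prod.fst (Sum.inr.inj h2.symm)
    · subst h1 h2; exact subdiv_adj_inr hg
    · subst h1 h2; exact (subdiv_adj_inr hg).symm
    · rw [← h1] at h2; exact congrArg Prod.fst (Sum.inr.inj h2.symm)

/-- If `G` has `m` edges and `k ≥ 3`, then `χ'_dom(G^{1/k}) ≥ m`. -/
theorem stmt_15 {V : Type*} [Fintype V] [LinearOrder V] (G : SimpleGraph V)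
    (m : ℕ) (hm : m = G.edgeSet.ncard) (k : ℕ) (hk : 3 ≤ k) :
    m ≤ domEdgeChrom (subdivision G k) := by
  
  classical
  have h1k : 1 < k - 1 := by omega
  have h0k : 0 < k - 1 := by omega
  set W := V ⊕ G.edgeSet × Fin (k - 1) with hW
  let v0 : G.edgeSet → W := fun e => Sum.inr (e, ⟨0, h0k⟩)
  let v1 : G.edgeSet → W := fun e => Sum.inr (e, ⟨1, h1k⟩)
  have hadj : ∀ e, (subdivision G k).Adj (v0 e) (v1 e) := by
    intro e
    rw [subdivision, SimpleGraph.fromRel_adj]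
    refine ⟨by simp [v0, v1, Fin.ext_iff], Or.inl ⟨rfl, rfl⟩⟩
  let fe : G.edgeSet → (subdivision G k).edgeSet :=
    fun e => ⟨s(v0 e, v1 e), (SimpleGraph.mem_edgeSet _).2 (hadj e)⟩
  -- any valid coloring needs at least m colors
  have bound : ∀ n (c : (subdivision G k).edgeSet → Fin n),
      IsDomEdgeColoring (subdivision G k) c → m ≤ n := by
    intro n c hc
    have hinj : Function.Injective (fun e => c (fe e)) := by
      intro e e' h
      obtain ⟨g, hg⟩ := hc.2 (c (fe e))
      have extract : ∀ e₀ : G.edgeSet, c (fe e₀) = c (fe e) →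
          ∃ l, Sum.inr (e₀, l) ∈ (g : Sym2 W) := by
        intro e₀ h₀
        rcases hg (fe e₀) h₀ with heq | ⟨-, v, hv1, hv2⟩
        · exact ⟨⟨0, h0k⟩, heq ▸ Sym2.mem_mk_left _ _⟩
        · rcases Sym2.mem_iff.1 hv2 with rfl | rfl
          · exact ⟨⟨0, h0k⟩, hv1⟩
          · exact ⟨⟨1, h1k⟩, hv1⟩
      obtain ⟨l1, m1⟩ := extract e rfl
      obtain ⟨l2, m2⟩ := extract e' h.symm
      exact subdiv_key (g : Sym2 W) g.2 m1 m2
    have : Nat.card G.edgeSet ≤ Nat.card (Fin n) :=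
      Nat.card_le_card_of_injective _ hinj
    simpa [hm, ← Nat.card_coe_set_eq] using this
  -- the defining set is nonempty
  have hne : {n | ∃ c : (subdivision G k).edgeSet → Fin n,
      IsDomEdgeColoring (subdivision G k) c}.Nonempty := by
    haveI : Fintype ((subdivision G k).edgeSet : Set (Sym2 W)) := Fintype.ofFinite _
    refine ⟨Fintype.card (subdivision G k).edgeSet,
      Fintype.equivFin (subdivision G k).edgeSet, ?_, ?_⟩
    · intro e f hef h
      exact hef.1 ((Fintype.equivFin _).injective h)
    · intro i
      refine ⟨(Fintype.equivFin _).symm i, fun f hf => Or.inl ?_⟩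
      exact (Equiv.eq_symm_apply _).2 hf
  have hmem := Nat.sInf_mem hne
  obtain ⟨c, hc⟩ := hmem
  exact bound _ c hc
end

section
/- If G is a connected finite simple graph with m ≥ 1 edges and k ≥ 2, then χ'_dom(P_{k+1}) ≤ χ'_dom(G^{1/k}) ≤ m · χ'_dom(P_{k+1}), where P_{k+1} is the path on k+1 vertices. -/
open SimpleGraph

/-!
Every superedge of `G^{1/k}` is an induced copy of `P_{k+1}`, and the `m` superedges partition
the edges of `G^{1/k}`. Restricting an optimal dominated colouring of `G^{1/k}` to one superedge
gives a dominated colouring of `P_{k+1}`: a colour class whose dominating edge `f` lies outside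
the copy meets `f` in a single vertex, so it is dominated by any of its own edges. Conversely,
colouring every superedge by an optimal colouring of `P_{k+1}`, with a separate palette for each
superedge, is a dominated colouring of `G^{1/k}` with `m · χ'_dom(P_{k+1})` colours.
-/

section General
variable {V W ι : Type*} {G : SimpleGraph V} {H : SimpleGraph W}

lemma domEdgeChrom_le {n : ℕ} {c : G.edgeSet → Fin n} (hc : IsDomEdgeColoring G c) :
    domEdgeChrom G ≤ n :=
  Nat.sInf_le ⟨c, hc⟩

lemma exists_isDomEdgeColoring_domEdgeChrom [Finite G.edgeSet] :
    ∃ c : G.edgeSet → Fin (domEdgeChrom G), IsDomEdgeColoring G c := by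
  let σ := Finite.equivFin G.edgeSet
  refine Nat.sInf_mem (s := {n | ∃ c : G.edgeSet → Fin n, IsDomEdgeColoring G c})
    ⟨_, σ, fun e f hef hc => hef.1 (σ.injective hc), fun i => ?_⟩
  exact ⟨σ.symm i, fun f hf => Or.inl (σ.eq_symm_apply.mpr hf)⟩

lemma domEdgeChrom_eq_zero_of_isEmpty [IsEmpty G.edgeSet] : domEdgeChrom G = 0 :=
  Nat.le_zero.mp <| domEdgeChrom_le (c := isEmptyElim)
    ⟨fun e => isEmptyElim e, fun i => i.elim0⟩

lemma edgeAdj_mapEdgeSet_iff (φ : G ↪g H) {F F' : G.edgeSet} :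
    EdgeAdj H (φ.mapEdgeSet F) (φ.mapEdgeSet F') ↔ EdgeAdj G F F' := by
  refine and_congr φ.mapEdgeSet.injective.ne_iff ⟨?_, ?_⟩
  · rintro ⟨w, hw, hw'⟩
    obtain ⟨x, hx, rfl⟩ := Sym2.mem_map.mp hw
    obtain ⟨x', hx', hxx'⟩ := Sym2.mem_map.mp hw'
    exact ⟨x, hx, φ.injective hxx' ▸ hx'⟩
  · rintro ⟨x, hx, hx'⟩
    exact ⟨φ x, Sym2.mem_map.mpr ⟨x, hx, rfl⟩, Sym2.mem_map.mpr ⟨x, hx', rfl⟩⟩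

lemma SimpleGraph.Embedding.exists_mapEdgeSet_eq_of_mem (φ : G ↪g H) (f : H.edgeSet) {x y : V}
    (hxy : x ≠ y) (hx : φ x ∈ (f : Sym2 W)) (hy : φ y ∈ (f : Sym2 W)) :
    ∃ F, φ.mapEdgeSet F = f := by
  have hf : (f : Sym2 W) = s(φ x, φ y) :=
    (Sym2.mem_and_mem_iff (φ.injective.ne hxy)).mp ⟨hx, hy⟩
  have hadj : G.Adj x y := φ.map_adj_iff.mp (by simpa [hf] using f.2)
  exact ⟨⟨s(x, y), hadj⟩, Subtype.ext (by simp [hf])⟩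

lemma domEdgeChrom_le_of_embedding [Finite H.edgeSet] (φ : G ↪g H) :
    domEdgeChrom G ≤ domEdgeChrom H := by
  rcases isEmpty_or_nonempty G.edgeSet with hG | ⟨⟨F₀⟩⟩
  · simp [domEdgeChrom_eq_zero_of_isEmpty]
  obtain ⟨c, hproper, hdom⟩ := exists_isDomEdgeColoring_domEdgeChrom (G := H)
  refine domEdgeChrom_le (c := c ∘ φ.mapEdgeSet)
    ⟨fun F F' h => hproper _ _ ((edgeAdj_mapEdgeSet_iff φ).mpr h), fun i => ?_⟩
  obtain ⟨f, hf⟩ := hdom i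
  by_cases hfφ : ∃ F, φ.mapEdgeSet F = f
  · obtain ⟨F, rfl⟩ := hfφ
    exact ⟨F, fun F' hF' =>
      (hf _ hF').imp (fun h => φ.mapEdgeSet.injective h) (edgeAdj_mapEdgeSet_iff φ).mp⟩
  by_cases hi : ∃ F₁, c (φ.mapEdgeSet F₁) = i
  swap
  · push Not at hi
    exact ⟨F₀, fun F hF => absurd hF (hi F)⟩
  obtain ⟨F₁, hF₁⟩ := hi
  -- All edges of the class meet `f`, and in the same vertex: otherwise `f` would lie in the
  -- image of `φ`.
  have meet : ∀ F, c (φ.mapEdgeSet F) = i → ∃ x ∈ (F : Sym2 V), φ x ∈ (f : Sym2 W) := by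
    intro F hF
    rcases hf _ hF with h | ⟨-, w, hwf, hwF⟩
    · exact absurd ⟨F, h⟩ hfφ
    obtain ⟨x, hx, rfl⟩ := Sym2.mem_map.mp hwF
    exact ⟨x, hx, hwf⟩
  obtain ⟨x₁, hx₁, hx₁f⟩ := meet F₁ hF₁
  refine ⟨F₁, fun F hF => ?_⟩
  obtain ⟨x, hx, hxf⟩ := meet F hF
  obtain rfl : x = x₁ := by
    by_contra hne
    exact hfφ (φ.exists_mapEdgeSet_eq_of_mem f hne hxf hx₁f)
  by_cases hFF : F = F₁
  · exact Or.inl hFF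
  · exact Or.inr ⟨Ne.symm hFF, x, hx₁, hx⟩

lemma domEdgeChrom_le_card_mul [Finite ι] [Finite G.edgeSet] (φ : ι → G ↪g H)
    (hcover : ∀ h : H.edgeSet, ∃ i F, (φ i).mapEdgeSet F = h) :
    domEdgeChrom H ≤ Nat.card ι * domEdgeChrom G := by
  obtain ⟨c, hproper, hdom⟩ := exists_isDomEdgeColoring_domEdgeChrom (G := G)
  let idx := Finite.equivFin ι
  choose copy pre hpre using hcover
  refine domEdgeChrom_le (c := fun h => finProdFinEquiv (idx (copy h), c (pre h)))
    ⟨fun h h' hadj hc => ?_, fun j => ?_⟩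
  · obtain ⟨hi, hc⟩ := Prod.ext_iff.mp (finProdFinEquiv.injective hc)
    have hcopy : copy h = copy h' := idx.injective hi
    rw [← hpre h, ← hpre h', hcopy, edgeAdj_mapEdgeSet_iff] at hadj
    exact hproper _ _ hadj hc
  · obtain ⟨⟨a, b⟩, rfl⟩ := finProdFinEquiv.surjective j
    obtain ⟨d, hd⟩ := hdom b
    refine ⟨(φ (idx.symm a)).mapEdgeSet d, fun h hj => ?_⟩
    obtain ⟨rfl, hb⟩ := Prod.ext_iff.mp (finProdFinEquiv.injective hj)
    have key := (hd _ hb).imp (congrArg (φ (copy h)).mapEdgeSet)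
      (edgeAdj_mapEdgeSet_iff (φ (copy h))).mpr
    rwa [hpre h, ← Equiv.symm_apply_apply idx (copy h)] at key

end General

section Subdivision
variable {V : Type*} [LinearOrder V] {G : SimpleGraph V} {k : ℕ}

lemma SimpleGraph.adj_inf_sup (e : G.edgeSet) :
    G.Adj (Sym2.inf (e : Sym2 V)) (Sym2.sup (e : Sym2 V)) := by
  have he := e.2
  rwa [← Sym2.sortEquiv.symm_apply_apply (e : Sym2 V)] at he

def superedgeVertex (e : G.edgeSet) (x : Fin (k + 1)) : V ⊕ G.edgeSet × Fin (k - 1) :=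
  if h₀ : (x : ℕ) = 0 then .inl (Sym2.inf (e : Sym2 V))
  else if h : (x : ℕ) = k then .inl (Sym2.sup (e : Sym2 V))
  else .inr (e, ⟨x - 1, by have := x.2; omega⟩)

@[simp] lemma superedgeVertex_zero (e : G.edgeSet) :
    superedgeVertex (k := k) e 0 = .inl (Sym2.inf (e : Sym2 V)) := rfl

lemma superedgeVertex_last (hk : k ≠ 0) (e : G.edgeSet) :
    superedgeVertex e (Fin.last k) = .inl (Sym2.sup (e : Sym2 V)) := by
  simp [superedgeVertex, hk]

lemma superedgeVertex_succ (e : G.edgeSet) (l : Fin (k - 1)) :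
    superedgeVertex e ⟨l + 1, by omega⟩ = .inr (e, l) := by
  have := l.2
  simp [superedgeVertex]
  omega

lemma superedgeVertex_injective (e : G.edgeSet) :
    Function.Injective (superedgeVertex (k := k) e) := by
  intro x y h
  have := (G.adj_inf_sup e).ne
  unfold superedgeVertex at h
  split_ifs at h <;> simp [Fin.ext_iff, this, this.symm] at h <;> omega

lemma subdivision_adj_superedgeVertex (e : G.edgeSet) (x y : Fin (k + 1)) :
    (subdivision G k).Adj (superedgeVertex e x) (superedgeVertex e y) ↔
      (pathGraph (k + 1)).Adj x y := by
  have hadj := G.adj_inf_sup e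
  rw [pathGraph_adj]
  unfold superedgeVertex
  split_ifs <;>
    simp [subdivision, Fin.ext_iff, hadj, hadj.symm, hadj.ne, hadj.ne.symm] <;> omega

def superedgeEmbedding (e : G.edgeSet) : pathGraph (k + 1) ↪g subdivision G k where
  toFun := superedgeVertex e
  inj' := superedgeVertex_injective e
  map_rel_iff' := subdivision_adj_superedgeVertex e _ _

lemma exists_superedgeVertex_of_adj {a b : V ⊕ G.edgeSet × Fin (k - 1)}
    (h : (subdivision G k).Adj a b) : ∃ e x y, (pathGraph (k + 1)).Adj x y ∧
      s(superedgeVertex e x, superedgeVertex e y) = s(a, b) := by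
  have hend : ∀ (e : G.edgeSet) (u : V) (l : Fin (k - 1)),
      ((l : ℕ) = 0 ∧ u = Sym2.inf (e : Sym2 V)) ∨ ((l : ℕ) = k - 2 ∧ u = Sym2.sup (e : Sym2 V)) →
      ∃ x y, (pathGraph (k + 1)).Adj x y ∧
        s(superedgeVertex e x, superedgeVertex e y) = s(.inl u, .inr (e, l)) := by
    rintro e u l (⟨hl, rfl⟩ | ⟨hl, rfl⟩)
    · refine ⟨0, ⟨l + 1, by omega⟩, by simp [pathGraph_adj, hl], ?_⟩
      rw [superedgeVertex_zero, superedgeVertex_succ]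
    · refine ⟨Fin.last k, ⟨l + 1, by omega⟩, by simp [pathGraph_adj]; omega, ?_⟩
      rw [superedgeVertex_last (by omega), superedgeVertex_succ]
  rcases a with u | ⟨e, l⟩ <;> rcases b with w | ⟨e', l'⟩ <;>
    simp only [subdivision, fromRel_adj, or_false, false_or] at h
  · have hk : k = 1 := h.2.elim And.left And.left
    have huw : G.Adj u w := h.2.elim And.right fun h => h.2.symm
    refine ⟨⟨s(u, w), huw⟩, 0, Fin.last k, by simp [pathGraph_adj, hk], ?_⟩
    rw [superedgeVertex_zero, superedgeVertex_last (by omega)]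
    rcases le_total u w with h | h <;> simp [h, Sym2.eq_swap]
  · obtain ⟨x, y, hxy, hs⟩ := hend e' u l' h.2
    exact ⟨e', x, y, hxy, hs⟩
  · obtain ⟨x, y, hxy, hs⟩ := hend e w l h.2
    exact ⟨e, x, y, hxy, hs.trans Sym2.eq_swap⟩
  · obtain ⟨rfl, hl⟩ | ⟨rfl, hl⟩ := h.2 <;>
      exact ⟨_, ⟨l + 1, by omega⟩, ⟨l' + 1, by omega⟩, by simp [pathGraph_adj]; omega,
        by rw [superedgeVertex_succ, superedgeVertex_succ]⟩

lemma exists_superedgeEmbedding_mapEdgeSet_eq (f : (subdivision G k).edgeSet) :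
    ∃ e F, (superedgeEmbedding e).mapEdgeSet F = f := by
  obtain ⟨z, hz⟩ := f
  induction z using Sym2.ind with
  | _ a b =>
    obtain ⟨e, x, y, hxy, hs⟩ := exists_superedgeVertex_of_adj hz
    exact ⟨e, ⟨s(x, y), hxy⟩, Subtype.ext hs⟩

end Subdivision

theorem stmt_16_general {V : Type*} [Fintype V] [LinearOrder V] (G : SimpleGraph V)
    (m : ℕ) (hm : m = G.edgeSet.ncard) (hm1 : 1 ≤ m)
    (k : ℕ) :
    domEdgeChrom (SimpleGraph.pathGraph (k + 1)) ≤ domEdgeChrom (subdivision G k) ∧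
    domEdgeChrom (subdivision G k) ≤ m * domEdgeChrom (SimpleGraph.pathGraph (k + 1)) := by
  obtain ⟨e⟩ : Nonempty G.edgeSet := (Set.nonempty_of_ncard_ne_zero (by omega)).to_subtype
  refine ⟨domEdgeChrom_le_of_embedding (superedgeEmbedding e), ?_⟩
  have := domEdgeChrom_le_card_mul (superedgeEmbedding (G := G) (k := k))
    exists_superedgeEmbedding_mapEdgeSet_eq
  rwa [Nat.card_coe_set_eq, ← hm] at this

/-- If `G` is connected with `m ≥ 1` edges and `k ≥ 2`, then
`χ'_dom(P_{k+1}) ≤ χ'_dom(G^{1/k}) ≤ m · χ'_dom(P_{k+1})`. -/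
theorem stmt_16 {V : Type*} [Fintype V] [LinearOrder V] (G : SimpleGraph V)
    (hG : G.Connected) (m : ℕ) (hm : m = G.edgeSet.ncard) (hm1 : 1 ≤ m)
    (k : ℕ) (hk : 2 ≤ k) :
    domEdgeChrom (SimpleGraph.pathGraph (k + 1)) ≤ domEdgeChrom (subdivision G k) ∧
    domEdgeChrom (subdivision G k) ≤ m * domEdgeChrom (SimpleGraph.pathGraph (k + 1)) :=
  stmt_16_general G m hm hm1 k
end
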